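/- arXiv:1811.02207 — 9 statements merged into one kernel-verified Lean document; each statement's English description precedes it below -/
import Mathlib

section
/- Let d ≥ 1, 𝐤 ∈ ℕ_{>0}^d, and 0 ≤ l ≤ k. Define 𝒦_l := Σ_{𝐚 ≼ 𝐤, 1≤|𝐚|≤l} |𝐚| and n_l := #{𝐚 ∈ ℕ^d : 𝐚 ≼ 𝐤, 1 ≤ |𝐚| ≤ l} (where for l > max degree one still restricts |𝐚| ≤ l). Then 𝒦_l / 𝒦_k ≤ n_l / n_k, equivalently 𝒦_l · n_k ≤ n_l · 𝒦_k. -/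
/-! `𝒮_l` consists of the elements of `𝒮_K` of degree at most `l`, and discarding the elements of
largest weight cannot raise the average weight: splitting a finite set `T` into `S = {w ≤ t}` and
its complement `U`, the claim reduces to `(∑_S w) |U| ≤ |S| (∑_U w)`, and `t |S| |U|` lies
between the two sides. -/

open Finset

theorem sum_filter_le_mul_card_le_card_filter_mul_sum {α R : Type*} [CommSemiring R]
    [LinearOrder R] [IsOrderedRing R] (T : Finset α) (w : α → R) (t : R) :
    (∑ a ∈ T.filter (w · ≤ t), w a) * T.card
      ≤ (T.filter (w · ≤ t)).card * ∑ a ∈ T, w a := by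
  set S := T.filter (w · ≤ t)
  set U := T.filter (fun a => ¬ w a ≤ t)
  have sum_S_le : ∑ a ∈ S, w a ≤ S.card * t := by
    simpa using sum_le_card_nsmul S w t fun a ha => (mem_filter.mp ha).2
  have le_sum_U : U.card * t ≤ ∑ a ∈ U, w a := by
    simpa using card_nsmul_le_sum U w t fun a ha => (not_le.mp (mem_filter.mp ha).2).le
  rw [← sum_filter_add_sum_filter_not T (w · ≤ t), ← card_filter_add_card_filter_not (w · ≤ t)]
  calc (∑ a ∈ S, w a) * ((S.card + U.card : ℕ) : R)
      = (∑ a ∈ S, w a) * S.card + (∑ a ∈ S, w a) * U.card := by push_cast; ring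
    _ ≤ (∑ a ∈ S, w a) * S.card + S.card * t * U.card := by gcongr
    _ = (∑ a ∈ S, w a) * S.card + S.card * (U.card * t) := by ring
    _ ≤ (∑ a ∈ S, w a) * S.card + S.card * ∑ a ∈ U, w a := by gcongr
    _ = S.card * ((∑ a ∈ S, w a) + ∑ a ∈ U, w a) := by ring

theorem stmt2_general (d : ℕ) (k : Fin d → ℕ)
    (l K : ℕ) (hlK : l ≤ K) :
    (∑ a ∈ (Finset.Iic k).filter (fun a => 1 ≤ ∑ i, a i ∧ (∑ i, a i) ≤ l), ∑ i, a i)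
        * ((Finset.Iic k).filter (fun a => 1 ≤ ∑ i, a i ∧ (∑ i, a i) ≤ K)).card
      ≤ ((Finset.Iic k).filter (fun a => 1 ≤ ∑ i, a i ∧ (∑ i, a i) ≤ l)).card
        * (∑ a ∈ (Finset.Iic k).filter (fun a => 1 ≤ ∑ i, a i ∧ (∑ i, a i) ≤ K), ∑ i, a i) := by
  have sublevel_eq_filter :
      (Finset.Iic k).filter (fun a => 1 ≤ ∑ i, a i ∧ (∑ i, a i) ≤ l)
        = ((Finset.Iic k).filter (fun a => 1 ≤ ∑ i, a i ∧ (∑ i, a i) ≤ K)).filter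
            (fun a => ∑ i, a i ≤ l) := by
    rw [filter_filter]
    exact filter_congr fun a _ => ⟨fun h => ⟨⟨h.1, h.2.trans hlK⟩, h.2⟩, fun h => ⟨h.1.1, h.2⟩⟩
  rw [sublevel_eq_filter]
  exact_mod_cast sum_filter_le_mul_card_le_card_filter_mul_sum _ (fun a : Fin d → ℕ => ∑ i, a i) l

/-- `𝒦_l · n_k ≤ n_l · 𝒦_k` for sublevel sets of the box `{𝐚 ≼ 𝐤}`. -/
theorem stmt2 (d : ℕ) (hd : 1 ≤ d) (k : Fin d → ℕ) (hk : ∀ i, 0 < k i)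
    (l K : ℕ) (hlK : l ≤ K) :
    (∑ a ∈ (Finset.Iic k).filter (fun a => 1 ≤ ∑ i, a i ∧ (∑ i, a i) ≤ l), ∑ i, a i)
        * ((Finset.Iic k).filter (fun a => 1 ≤ ∑ i, a i ∧ (∑ i, a i) ≤ K)).card
      ≤ ((Finset.Iic k).filter (fun a => 1 ≤ ∑ i, a i ∧ (∑ i, a i) ≤ l)).card
        * (∑ a ∈ (Finset.Iic k).filter (fun a => 1 ≤ ∑ i, a i ∧ (∑ i, a i) ≤ K), ∑ i, a i) :=
  stmt2_general d k l K hlK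
end

section
/- Let d ≥ 0 and 𝐤 ∈ ℕ^d. For l ∈ ℤ let Λ^𝐤_l be the number of 𝐚 ∈ ℕ^d with 𝐚 ≼ 𝐤 and |𝐚| = l (so Λ^𝐤_l = 0 for l < 0). Then for all integers a, b, a', b' with a + b = a' + b' and b' ≥ max(a, b), we have Λ^𝐤_a · Λ^𝐤_b ≥ Λ^𝐤_{a'} · Λ^𝐤_{b'}. -/
/-!
A sequence `f : ℤ → ℕ` has the spreading property if moving two indices apart while keeping
their sum never increases `f a * f b`. It suffices to check unit moves
`f (a - 1) * f (b + 1) ≤ f a * f b` for `a ≤ b`. The level counts of `𝐤 ∈ ℕ^d` arise from the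
indicator of `0` by `d` successive window sums `l ↦ ∑_{j ≤ m} f (l - j)`, and a window sum
inherits the unit-move inequality: writing `g` for the window sum, the boundary terms in
`g (a - 1) = g a - f a + f (a - 1 - m)` and `g (b + 1) = g b - f (b - m) + f (b + 1)` are
controlled by the spreading property of `f` applied termwise.
-/

open Finset

def SpreadProductAnti (f : ℤ → ℕ) : Prop :=
  ∀ a b a' b' : ℤ, a + b = a' + b' → a ≤ b' → b ≤ b' → f a' * f b' ≤ f a * f b

theorem spreadProductAnti_of_step {f : ℤ → ℕ}
    (h : ∀ a b : ℤ, a ≤ b → f (a - 1) * f (b + 1) ≤ f a * f b) : SpreadProductAnti f := by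
  have spread : ∀ n : ℕ, ∀ a b : ℤ, a ≤ b → f (a - n) * f (b + n) ≤ f a * f b := by
    intro n
    induction n with
    | zero => simp
    | succ n ih =>
      intro a b hab
      calc f (a - ↑(n + 1)) * f (b + ↑(n + 1)) = f (a - n - 1) * f (b + n + 1) := by
            push_cast; ring_nf
        _ ≤ f (a - n) * f (b + n) := h _ _ (by omega)
        _ ≤ f a * f b := ih a b hab
  intro a b a' b' hsum ha hb
  rcases le_total a b with hab | hab
  · obtain ⟨n, rfl⟩ := Int.le.dest hb
    obtain rfl : a' = a - n := by omega
    exact spread n a b hab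
  · obtain ⟨n, rfl⟩ := Int.le.dest ha
    obtain rfl : a' = b - n := by omega
    rw [mul_comm (f a)]
    exact spread n b a hab

theorem SpreadProductAnti.windowSum {f : ℤ → ℕ} (hf : SpreadProductAnti f) (m : ℕ) :
    SpreadProductAnti (fun l => ∑ j ∈ range (m + 1), f (l - j)) := by
  refine spreadProductAnti_of_step fun a b hab => ?_
  set g : ℤ → ℕ := fun l => ∑ j ∈ range (m + 1), f (l - j)
  change g (a - 1) * g (b + 1) ≤ g a * g b
  have g_succ (l : ℤ) : g (l + 1) + f (l - m) = g l + f (l + 1) := by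
    simp only [g]
    rw [sum_range_succ', sum_range_succ]
    push_cast
    simp only [add_sub_add_right_eq_sub, sub_zero]
    ring
  have left : g (a - 1) * f (b + 1) ≤ g b * f a := by
    simp only [g, sum_mul]
    refine sum_le_sum fun j _ => ?_
    rw [mul_comm _ (f a)]
    exact hf a (b - j) (a - 1 - j) (b + 1) (by ring) (by omega) (by omega)
  have right : g b * f (a - 1 - m) ≤ g (a - 1) * f (b - m) := by
    simp only [g, sum_mul]
    refine sum_le_sum fun j hj => ?_
    rw [mul_comm _ (f (a - 1 - m))]
    have hj : j ≤ m := mem_range_succ_iff.mp hj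
    exact hf (a - 1 - j) (b - m) (a - 1 - m) (b - j) (by ring) (by omega) (by omega)
  have hA := g_succ (a - 1)
  have hB := g_succ b
  simp only [sub_add_cancel] at hA
  clear_value g
  zify at left right hA hB ⊢
  linear_combination left + right - (g b : ℤ) * hA + (g (a - 1) : ℤ) * hB

/-- `Λ^𝐤_l`, the number of `𝐚 ≼ 𝐤` with `|𝐚| = l`. -/
def levelCount {d : ℕ} (k : Fin d → ℕ) (l : ℤ) : ℕ :=
  #{a ∈ Iic k | ∑ i, (a i : ℤ) = l}

theorem levelCount_fin_zero (k : Fin 0 → ℕ) (l : ℤ) :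
    levelCount k l = if l = 0 then 1 else 0 := by
  have : Iic k = {k} := by ext a; simp [Subsingleton.elim a k]
  split_ifs with hl <;> simp [levelCount, this, hl, eq_comm]

theorem levelCount_succ {d : ℕ} (k : Fin (d + 1) → ℕ) (l : ℤ) :
    levelCount k l = ∑ j ∈ range (k (Fin.last d) + 1),
      levelCount (fun i : Fin d => k i.castSucc) (l - j) := by
  have last_mem : ∀ a ∈ {a ∈ Iic k | ∑ i, (a i : ℤ) = l},
      a (Fin.last d) ∈ range (k (Fin.last d) + 1) := fun a ha => by
    simp only [mem_filter, mem_Iic] at ha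
    exact mem_range_succ_iff.mpr (ha.1 _)
  rw [levelCount, card_eq_sum_card_fiberwise last_mem]
  refine sum_congr rfl fun j hj => ?_
  have hj : j ≤ k (Fin.last d) := mem_range_succ_iff.mp hj
  refine card_nbij' Fin.init (Fin.snoc · j) ?_ ?_ ?_ ?_
  · intro a ha
    simp only [mem_coe, mem_filter, mem_Iic, Fin.sum_univ_castSucc] at ha ⊢
    obtain ⟨⟨hak, rfl⟩, rfl⟩ := ha
    exact ⟨fun i => hak i.castSucc, by simp [Fin.init]⟩
  · intro b hb
    simp only [mem_coe, mem_filter, mem_Iic, Fin.sum_univ_castSucc, Fin.snoc_castSucc,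
      Fin.snoc_last] at hb ⊢
    refine ⟨⟨fun i => Fin.lastCases (by simpa using hj) (fun i => by simpa using hb.1 i) i,
      by omega⟩, trivial⟩
  · intro a ha
    simp only [mem_coe, mem_filter] at ha
    simp [← ha.2]
  · intro b _
    simp

theorem spreadProductAnti_levelCount {d : ℕ} (k : Fin d → ℕ) :
    SpreadProductAnti (levelCount k) := by
  induction d with
  | zero =>
    simp only [SpreadProductAnti, levelCount_fin_zero]
    intro a b a' b' hsum ha hb
    split_ifs <;> omega
  | succ d ih =>
    rw [show levelCount k = _ from funext (levelCount_succ k)]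
    exact (ih fun i => k i.castSucc).windowSum (k (Fin.last d))

/-- Log-concavity type inequality for the level set counts
`Λ^𝐤_l = #{𝐚 ≼ 𝐤 : |𝐚| = l}` (with `Λ^𝐤_l = 0` for `l < 0`):
if `a + b = a' + b'` and `b' ≥ max(a,b)` then `Λ_a·Λ_b ≥ Λ_{a'}·Λ_{b'}`. -/
theorem stmt3 (d : ℕ) (k : Fin d → ℕ)
    (Λ : ℤ → ℕ)
    (hΛ : ∀ l : ℤ, Λ l = ((Finset.Iic k).filter (fun a => (∑ i, (a i : ℤ)) = l)).card)
    (a b a' b' : ℤ) (hsum : a + b = a' + b') (hb'a : a ≤ b') (hb'b : b ≤ b') :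
    Λ a' * Λ b' ≤ Λ a * Λ b := by
  simp only [hΛ]
  exact spreadProductAnti_levelCount k a b a' b' hsum hb'a hb'b
end

section
/- Let d ≥ 1, 𝐤 ∈ ℕ_{>0}^d, 1 ≤ l < l', and let B ⊆ ℕ^d be an up-set with respect to the product order. Let 𝒮^𝐤_j = {𝐚 ∈ ℕ^d : 𝐚 ≼ 𝐤, 1 ≤ |𝐚| ≤ j}. Then |𝒮^𝐤_{l'}| · |B ∩ 𝒮^𝐤_l| ≤ |𝒮^𝐤_l| · |B ∩ 𝒮^𝐤_{l'}|. -/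
/-!
Let `V m` be the set of points of the box `{a ≼ k}` with `|a| = m`. The heart of the matter is
the level inequality `|V (m+1)| · |B ∩ V m| ≤ |V m| · |B ∩ V (m+1)|`, proved by induction on `d`
by splitting off the first coordinate `j ≤ n`. Level `m` then consists of the cells
`{j} × V' (m - j)` and level `m + 1` of the cells `{j} × V' (m + 1 - j)`; each lower cell lies
below two upper cells (raise `j`, or raise the rest), and along both edges the density of `B` can
only go up. An explicit flow along this zigzag, nonnegative because `m ↦ |V' m|` is log-concave
(PF₂), averages these edge comparisons into the level inequality. Log-concavity itself survives
the induction because `|V m|` is a window sum of `|V' ·|`. Chaining consecutive levels and summing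
over `1 ≤ |a| ≤ l` gives the theorem.
-/

open Finset

/-- For nonnegative sequences this is log-concavity without internal zeros
(Pólya frequency of order 2). -/
def IsPF2 {ι α : Type*} [Preorder ι] [Add ι] [One ι] [Mul α] [LE α] (r : ι → α) : Prop :=
  ∀ ⦃a b : ι⦄, a ≤ b → r a * r (b + 1) ≤ r (a + 1) * r b

namespace IsPF2

variable {α : Type*}

theorem mul_le_mul_add [CommMagma α] [Preorder α] {r : ℤ → α} (hr : IsPF2 r) {a b : ℤ}
    (hab : a ≤ b) (t : ℕ) : r a * r (b + t) ≤ r (a + t) * r b := by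
  induction t generalizing a with
  | zero => simp
  | succ t ih =>
    rcases hab.eq_or_lt with rfl | hlt
    · rw [mul_comm]
    · calc r a * r (b + (t + 1 : ℕ)) ≤ r (a + 1) * r (b + t) := by
            simpa [add_assoc] using hr (a := a) (b := b + t) (by omega)
        _ ≤ r (a + 1 + t) * r b := ih (by omega)
        _ = r (a + (t + 1 : ℕ)) * r b := by push_cast; ring_nf

theorem window [CommSemiring α] [PartialOrder α] [IsOrderedRing α] {r : ℤ → α} (hr : IsPF2 r)
    (n : ℕ) : IsPF2 fun m => ∑ i ∈ range (n + 1), r (m - i) := by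
  intro a b hab
  set X := ∑ i ∈ range n, r (a - i)
  set U := ∑ j ∈ range n, r (b - j)
  have hW : ∀ m,
      ∑ i ∈ range (n + 1), r (m + 1 - i) = r (m + 1) + ∑ i ∈ range n, r (m - i) := by
    intro m
    rw [sum_range_succ']
    simp only [Nat.cast_add, Nat.cast_one, Nat.cast_zero, sub_zero, add_comm (r (m + 1))]
    congr 1
    refine sum_congr rfl fun i _ => ?_
    ring_nf
  have h₁ : (∑ i ∈ range (n + 1), r (a - i)) * r (b + 1)
      ≤ r (a + 1) * ∑ i ∈ range (n + 1), r (b - i) := by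
    rw [sum_mul, mul_sum]
    refine sum_le_sum fun i _ => ?_
    convert hr.mul_le_mul_add (a := a - i) (b := b - i) (by omega) (i + 1) using 3 <;>
      push_cast <;> ring
  have h₂ : r (a - n) * U ≤ X * r (b - n) := by
    rw [mul_sum, sum_mul]
    refine sum_le_sum fun j hj => ?_
    have hjn : j ≤ n := (mem_range.1 hj).le
    simpa [Nat.cast_sub hjn] using
      hr.mul_le_mul_add (a := a - n) (b := b - n) (by omega) (n - j)
  simp only [hW, sum_range_succ _ n] at h₁ ⊢
  calc (X + r (a - n)) * (r (b + 1) + U)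
      = (X + r (a - n)) * r (b + 1) + X * U + r (a - n) * U := by ring
    _ ≤ r (a + 1) * (U + r (b - n)) + X * U + X * r (b - n) := by gcongr
    _ = (r (a + 1) + X) * (U + r (b - n)) := by ring

theorem comp_sub [CommMagma α] [Preorder α] {r : ℤ → α} (hr : IsPF2 r) (c : ℤ) :
    IsPF2 fun i : ℕ => r (c - i) := by
  intro a b hab
  have h := hr (a := c - (b + 1 : ℕ)) (b := c - (a + 1 : ℕ)) (by omega)
  rw [show c - ((a + 1 : ℕ) : ℤ) + 1 = c - a by push_cast; ring,
    show c - ((b + 1 : ℕ) : ℤ) + 1 = c - b by push_cast; ring] at h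
  calc r (c - a) * r (c - (b + 1 : ℕ)) = r (c - (b + 1 : ℕ)) * r (c - a) := mul_comm _ _
    _ ≤ r (c - b) * r (c - (a + 1 : ℕ)) := h
    _ = r (c - (a + 1 : ℕ)) * r (c - b) := mul_comm _ _

theorem sum_range_mul_sum_range_le [CommSemiring α] [PartialOrder α] [IsOrderedRing α]
    {ρ : ℕ → α} (hρ : IsPF2 ρ) {j N : ℕ} (hjN : j ≤ N) :
    (∑ t ∈ range j, ρ t) * ∑ t ∈ range N, ρ (t + 1)
      ≤ (∑ t ∈ range j, ρ (t + 1)) * ∑ t ∈ range N, ρ t := by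
  rw [← sum_range_add_sum_Ico _ hjN, ← sum_range_add_sum_Ico _ hjN, mul_add, mul_add,
    mul_comm (∑ t ∈ range j, ρ t) (∑ t ∈ range j, ρ (t + 1))]
  refine add_le_add le_rfl ?_
  rw [sum_mul_sum, sum_mul_sum]
  refine sum_le_sum fun s hs => sum_le_sum fun t ht => ?_
  exact hρ (by simp only [mem_range, mem_Ico] at hs ht; omega)

theorem zigzag_sum_mul_le [CommRing α] [PartialOrder α] [IsOrderedRing α] {ρ : ℕ → α}
    (hρ0 : ∀ i, 0 ≤ ρ i) (hρ : IsPF2 ρ) (n : ℕ) {x y : ℕ → α}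
    (hup : ∀ j ≤ n, ρ j ≠ 0 → x j ≤ y j) (hside : ∀ j ≤ n, x j ≤ y (j + 1)) :
    (∑ j ∈ range (n + 1), x j * ρ (j + 1)) * ∑ j ∈ range (n + 1), ρ j
      ≤ (∑ j ∈ range (n + 1), y j * ρ j) * ∑ j ∈ range (n + 1), ρ (j + 1) := by
  -- Lower cell `j` (weight `ρ (j + 1)`) lies below upper cells `j` and `j + 1` (weights `ρ j`,
  -- `ρ (j + 1)`); `up j` and `side j` are the flows, scaled by `R₀ * R₁`, into upper cell `j`
  -- from lower cells `j` and `j - 1`.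
  set R₀ := ∑ j ∈ range (n + 1), ρ j
  set R₁ := ∑ j ∈ range (n + 1), ρ (j + 1)
  set U : ℕ → α := fun j => ∑ t ∈ range j, ρ t
  set L : ℕ → α := fun j => ∑ t ∈ range j, ρ (t + 1)
  set up : ℕ → α := fun j => U (j + 1) * R₁ - L j * R₀
  set side : ℕ → α := fun j => L j * R₀ - U j * R₁
  have hout : ∀ j, up j + side (j + 1) = ρ (j + 1) * R₀ := fun j => by
    simp only [up, side, L, sum_range_succ _ j]; ring
  have hin : ∀ j, up j + side j = ρ j * R₁ := fun j => by
    simp only [up, side, U, sum_range_succ _ j]; ring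
  have hside0 : ∀ j ≤ n + 1, 0 ≤ side j := fun j hj =>
    sub_nonneg.2 (hρ.sum_range_mul_sum_range_le hj)
  have hup0 : ∀ j ≤ n, 0 ≤ up j := fun j hj => by
    have hU : U (j + 1) = ρ 0 + L j := by simp only [U, L, sum_range_succ' _ j, add_comm]
    have hR : R₀ + ρ (n + 1) = ρ 0 + R₁ := by rw [← sum_range_succ, sum_range_succ']; ring
    have hL : L j ≤ R₁ := sum_le_sum_of_subset_of_nonneg (range_subset_range.2 (by omega))
      fun _ _ _ => hρ0 _
    have : up j = ρ 0 * (R₁ - L j) + L j * ρ (n + 1) := by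
      simp only [up, hU]; linear_combination (-L j) * hR
    rw [this]
    exact add_nonneg (mul_nonneg (hρ0 0) (sub_nonneg.2 hL))
      (mul_nonneg (sum_nonneg fun t _ => hρ0 (t + 1)) (hρ0 _))
  have hside_ends : side 0 = 0 ∧ side (n + 1) = 0 := by
    constructor <;> simp only [side, U, L, R₀, R₁, sum_range_zero] <;> ring
  calc (∑ j ∈ range (n + 1), x j * ρ (j + 1)) * R₀
      = ∑ j ∈ range (n + 1), (x j * up j + x j * side (j + 1)) := by
        rw [sum_mul]; refine sum_congr rfl fun j _ => ?_; rw [mul_assoc, ← hout]; ring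
    _ ≤ ∑ j ∈ range (n + 1), (y j * up j + y (j + 1) * side (j + 1)) := by
        refine sum_le_sum fun j hj => add_le_add ?_ ?_
        · have hjn : j ≤ n := Nat.lt_succ_iff.1 (mem_range.1 hj)
          by_cases hρj : ρ j = 0
          · have h := hin j
            rw [hρj, zero_mul] at h
            have : up j = 0 := le_antisymm
              (by rw [eq_neg_of_add_eq_zero_left h]; exact neg_nonpos.2 (hside0 j (by omega)))
              (hup0 j hjn)
            rw [this, mul_zero, mul_zero]
          · exact mul_le_mul_of_nonneg_right (hup j hjn hρj) (hup0 j hjn)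
        · exact mul_le_mul_of_nonneg_right (hside j (by simpa [Nat.lt_succ_iff] using hj))
            (hside0 _ (by simpa [Nat.lt_succ_iff] using hj))
    _ = ∑ j ∈ range (n + 1), y j * (up j + side j) := by
        have hshift := (sum_range_succ' (fun j => y j * side j) (n + 1)).symm.trans
          (sum_range_succ (fun j => y j * side j) (n + 1))
        simp only [hside_ends, mul_zero, add_zero] at hshift
        simp only [sum_add_distrib, mul_add, hshift]
    _ = (∑ j ∈ range (n + 1), y j * ρ j) * R₁ := by
        rw [sum_mul]; refine sum_congr rfl fun j _ => ?_; rw [hin, mul_assoc]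

end IsPF2

theorem sum_mul_sum_le_of_subset {ι α : Type*} [DecidableEq ι] [CommSemiring α]
    [PartialOrder α] [IsOrderedRing α] {s t : Finset ι} (hst : s ⊆ t) {f g : ι → α}
    (h : ∀ i ∈ s, ∀ j ∈ t \ s, f j * g i ≤ f i * g j) :
    (∑ i ∈ t, f i) * ∑ i ∈ s, g i ≤ (∑ i ∈ s, f i) * ∑ i ∈ t, g i := by
  rw [← sum_sdiff hst, ← sum_sdiff hst (f := g), add_mul, mul_add,
    mul_comm (∑ i ∈ s, f i) (∑ i ∈ s, g i)]
  refine add_le_add ?_ le_rfl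
  rw [sum_mul_sum, sum_mul_sum, sum_comm]
  exact sum_le_sum fun i hi => sum_le_sum fun j hj => h i hi j hj

theorem mul_le_mul_of_le_of_forall_succ {v b : ℤ → ℕ}
    (hstep : ∀ m, v (m + 1) * b m ≤ v m * b (m + 1)) (hb : ∀ m < 0, b m = 0)
    (hv : ∀ m, 0 ≤ m → v m = 0 → v (m + 1) = 0) {m m' : ℤ} (hmm' : m ≤ m') :
    v m' * b m ≤ v m * b m' := by
  induction m', hmm' using Int.leInduction with
  | base => rw [mul_comm]
  | succ m' hmm' ih =>
    rcases (v m').eq_zero_or_pos with h0 | hpos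
    · rcases lt_or_ge m' 0 with hneg | hnonneg
      · simp [hb m (by omega)]
      · simp [hv m' hnonneg h0]
    · refine Nat.le_of_mul_le_mul_left ?_ hpos
      calc v m' * (v (m' + 1) * b m) = v (m' + 1) * (v m' * b m) := by ring
        _ ≤ v (m' + 1) * (v m * b m') := Nat.mul_le_mul_left _ ih
        _ = v m * (v (m' + 1) * b m') := by ring
        _ ≤ v m * (v m' * b (m' + 1)) := Nat.mul_le_mul_left _ (hstep m')
        _ = v m' * (v m * b (m' + 1)) := by ring

/-- Indexed by `ℤ` so that the levels `m - j` of a slice need no truncated subtraction. -/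
def boxLevel {d : ℕ} (k : Fin d → ℕ) (m : ℤ) : Finset (Fin d → ℕ) :=
  {a ∈ Iic k | ((∑ i, a i : ℕ) : ℤ) = m}

theorem mem_boxLevel {d : ℕ} {k a : Fin d → ℕ} {m : ℤ} :
    a ∈ boxLevel k m ↔ a ≤ k ∧ ((∑ i, a i : ℕ) : ℤ) = m := by
  simp [boxLevel]

theorem card_filter_boxLevel_cons {d : ℕ} (n : ℕ) (k : Fin d → ℕ) (m : ℤ)
    (P : (Fin (d + 1) → ℕ) → Prop) [DecidablePred P] :
    #{a ∈ boxLevel (Fin.cons n k) m | P a}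
      = ∑ j ∈ range (n + 1), #{x ∈ boxLevel k (m - j) | P (Fin.cons j x)} := by
  rw [card_eq_sum_card_fiberwise (f := fun a => a 0) (t := range (n + 1))]
  · refine sum_congr rfl fun j hj => card_nbij' Fin.tail (fun x => Fin.cons j x) ?_ ?_ ?_ ?_
    · intro a ha
      simp only [coe_filter, mem_filter, Set.mem_ofPred_eq] at ha
      obtain ⟨⟨ha, hP⟩, rfl⟩ := ha
      simp only [mem_boxLevel, Fin.le_cons, Fin.sum_univ_succ, Nat.cast_add] at ha
      simp only [coe_filter, mem_boxLevel, Set.mem_ofPred_eq, Fin.cons_self_tail, Fin.tail]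
      exact ⟨⟨ha.1.2, by omega⟩, hP⟩
    · intro x hx
      simp only [coe_filter, mem_boxLevel, Set.mem_ofPred_eq] at hx
      simp only [coe_filter, mem_filter, mem_boxLevel, Set.mem_ofPred_eq, Fin.cons_le_cons,
        Fin.sum_cons, Fin.cons_zero, Nat.cast_add]
      exact ⟨⟨⟨⟨by simpa [Nat.lt_succ_iff] using hj, hx.1.1⟩, by omega⟩, hx.2⟩, trivial⟩
    · intro a ha
      simp only [coe_filter, mem_filter, Set.mem_ofPred_eq] at ha
      rw [← ha.2]
      exact Fin.cons_self_tail a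
    · intro x _
      exact Fin.tail_cons _ _
  · intro a ha
    simp only [coe_filter, mem_boxLevel, Set.mem_ofPred_eq, Fin.le_cons, coe_range,
      Set.mem_Iio] at ha ⊢
    omega

theorem card_boxLevel_cons {d : ℕ} (n : ℕ) (k : Fin d → ℕ) (m : ℤ) :
    #(boxLevel (Fin.cons n k) m) = ∑ j ∈ range (n + 1), #(boxLevel k (m - j)) := by
  simpa using card_filter_boxLevel_cons n k m fun _ => True

theorem boxLevel_eq_empty_of_neg {d : ℕ} (k : Fin d → ℕ) {m : ℤ} (hm : m < 0) :
    boxLevel k m = ∅ := by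
  ext a
  simp only [mem_boxLevel, notMem_empty, iff_false, not_and]
  omega

theorem boxLevel_fin_zero_eq_empty (k : Fin 0 → ℕ) {m : ℤ} (hm : m ≠ 0) :
    boxLevel k m = ∅ := by
  ext a
  simp [mem_boxLevel, hm.symm]

theorem isPF2_card_boxLevel {d : ℕ} (k : Fin d → ℕ) : IsPF2 fun m => #(boxLevel k m) := by
  induction d with
  | zero =>
    intro a b hab
    rcases eq_or_ne a 0 with rfl | ha
    · simp [boxLevel_fin_zero_eq_empty k (m := b + 1) (by omega)]
    · simp [boxLevel_fin_zero_eq_empty k ha]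
  | succ d ih =>
    refine Fin.consCases (fun n k => ?_) k
    simp only [card_boxLevel_cons]
    exact (ih k).window n

theorem card_boxLevel_succ_eq_zero {d : ℕ} (k : Fin d → ℕ) {m : ℤ} (hm : 0 ≤ m)
    (h : #(boxLevel k m) = 0) : #(boxLevel k (m + 1)) = 0 := by
  have h₀ : 0 < #(boxLevel k 0) := card_pos.2 ⟨0, by simp [mem_boxLevel]⟩
  have := isPF2_card_boxLevel k hm
  simp only [zero_add, h, mul_zero, nonpos_iff_eq_zero, mul_eq_zero] at this
  exact this.resolve_left h₀.ne'

theorem card_boxLevel_cons_mul_card_filter_le {d : ℕ} (n : ℕ) (k : Fin d → ℕ)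
    (B : Set (Fin (d + 1) → ℕ)) [DecidablePred (· ∈ B)] (hB : IsUpperSet B)
    (hslice : ∀ (j : ℕ) (m : ℤ),
      #(boxLevel k (m + 1)) * #{x ∈ boxLevel k m | Fin.cons j x ∈ B}
        ≤ #(boxLevel k m) * #{x ∈ boxLevel k (m + 1) | Fin.cons j x ∈ B}) (m : ℤ) :
    #(boxLevel (Fin.cons n k) (m + 1)) * #{a ∈ boxLevel (Fin.cons n k) m | a ∈ B}
      ≤ #(boxLevel (Fin.cons n k) m) * #{a ∈ boxLevel (Fin.cons n k) (m + 1) | a ∈ B} := by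
  simp only [card_boxLevel_cons, card_filter_boxLevel_cons]
  have hv := isPF2_card_boxLevel k
  set v : ℤ → ℕ := fun m => #(boxLevel k m)
  set c : ℕ → ℤ → ℕ := fun j m => #{x ∈ boxLevel k m | Fin.cons j x ∈ B}
  have hcv : ∀ j m, c j m ≤ v m := fun j m => card_filter_le _ _
  have hc_succ : ∀ j m, c j m ≤ c (j + 1) m := fun j m =>
    card_le_card <| monotone_filter_right _ fun x _ hx =>
      hB (Fin.cons_le_cons.2 ⟨Nat.le_succ j, le_rfl⟩) hx
  have hshift : ∀ j : ℕ, m + 1 - ((j + 1 : ℕ) : ℤ) = m - j := fun j => by push_cast; ring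
  have hcancel : ∀ j m, (c j m / v m : ℚ) * v m = c j m := fun j m =>
    div_mul_cancel_of_imp fun h => by
      rw [Nat.cast_eq_zero] at h ⊢; exact Nat.eq_zero_of_le_zero (h ▸ hcv j m)
  have key := IsPF2.zigzag_sum_mul_le (ρ := fun i => (v (m + 1 - i) : ℚ))
    (fun _ => Nat.cast_nonneg _)
    (fun a b hab => by
      have h := hv.comp_sub (m + 1) hab
      dsimp only at h ⊢
      exact_mod_cast h) n
    (x := fun j => (c j (m - j) / v (m - j) : ℚ))
    (y := fun j => (c j (m + 1 - j) / v (m + 1 - j) : ℚ)) ?_ ?_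
  · simp only [hshift, hcancel] at key
    norm_cast at key
    rwa [mul_comm, mul_comm (∑ j ∈ range (n + 1), c j (m + 1 - j))] at key
  · intro j _ hj
    rcases (v (m - j)).eq_zero_or_pos with h0 | hpos
    · simp only [h0, Nat.cast_zero, div_zero]
      positivity
    · rw [div_le_div_iff₀ (by exact_mod_cast hpos)
        (lt_of_le_of_ne (by positivity) (Ne.symm hj))]
      have h := hslice j (m - j)
      rw [show m - (j : ℤ) + 1 = m + 1 - j by ring, mul_comm, mul_comm (v _)] at h
      exact_mod_cast h
  · intro j _
    simp only [hshift]
    exact div_le_div_of_nonneg_right (by exact_mod_cast hc_succ j _) (Nat.cast_nonneg _)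

theorem card_boxLevel_mul_card_filter_le {d : ℕ} (k : Fin d → ℕ) (B : Set (Fin d → ℕ))
    [DecidablePred (· ∈ B)] (hB : IsUpperSet B) (m : ℤ) :
    #(boxLevel k (m + 1)) * #{a ∈ boxLevel k m | a ∈ B}
      ≤ #(boxLevel k m) * #{a ∈ boxLevel k (m + 1) | a ∈ B} := by
  induction d generalizing m with
  | zero =>
    rcases eq_or_ne m 0 with rfl | hm
    · simp [boxLevel_fin_zero_eq_empty k (m := 1) one_ne_zero]
    · simp [boxLevel_fin_zero_eq_empty k hm]
  | succ d ih =>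
    induction k using Fin.consCases with
    | _ n k =>
    refine card_boxLevel_cons_mul_card_filter_le n k B hB (fun j m => ?_) m
    exact ih k {x | (Fin.cons j x : Fin (d + 1) → ℕ) ∈ B}
      (hB.preimage fun x y hxy => Fin.cons_le_cons.2 ⟨le_refl j, hxy⟩) m

theorem card_boxLevel_mul_card_filter_le_of_le {d : ℕ} (k : Fin d → ℕ) (B : Set (Fin d → ℕ))
    [DecidablePred (· ∈ B)] (hB : IsUpperSet B) {m m' : ℤ} (hmm' : m ≤ m') :
    #(boxLevel k m') * #{a ∈ boxLevel k m | a ∈ B}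
      ≤ #(boxLevel k m) * #{a ∈ boxLevel k m' | a ∈ B} :=
  mul_le_mul_of_le_of_forall_succ (card_boxLevel_mul_card_filter_le k B hB)
    (fun m hm => by simp [boxLevel_eq_empty_of_neg k hm])
    (fun _ hm h => card_boxLevel_succ_eq_zero k hm h) hmm'

theorem card_filter_sublevel {d : ℕ} (k : Fin d → ℕ) (l : ℕ) (P : (Fin d → ℕ) → Prop)
    [DecidablePred P] :
    #{a ∈ {a ∈ Iic k | 1 ≤ ∑ i, a i ∧ ∑ i, a i ≤ l} | P a}
      = ∑ m ∈ Icc 1 l, #{a ∈ boxLevel k m | P a} := by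
  rw [card_eq_sum_card_fiberwise (f := fun a => ∑ i, a i) (t := Icc 1 l)]
  · refine sum_congr rfl fun m hm => congrArg card <| ext fun a => ?_
    simp only [mem_filter, mem_boxLevel, Nat.cast_inj, mem_Iic]
    rw [mem_Icc] at hm
    constructor
    · rintro ⟨⟨⟨hak, -⟩, hP⟩, rfl⟩
      exact ⟨⟨hak, rfl⟩, hP⟩
    · rintro ⟨⟨hak, rfl⟩, hP⟩
      exact ⟨⟨⟨hak, hm⟩, hP⟩, rfl⟩
  · intro a ha
    simp only [coe_filter, mem_filter, Set.mem_ofPred_eq, coe_Icc, Set.mem_Icc] at ha ⊢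
    exact ha.1.2

theorem stmt5_general (d : ℕ) (k : Fin d → ℕ)
    (l l' : ℕ) (hll' : l < l')
    (B : Set (Fin d → ℕ)) [DecidablePred (· ∈ B)]
    (hB : ∀ b c, b ∈ B → b ≤ c → c ∈ B) :
    ((Finset.Iic k).filter (fun a => 1 ≤ ∑ i, a i ∧ (∑ i, a i) ≤ l')).card
        * (((Finset.Iic k).filter (fun a => 1 ≤ ∑ i, a i ∧ (∑ i, a i) ≤ l)).filter
            (fun a => a ∈ B)).card
      ≤ ((Finset.Iic k).filter (fun a => 1 ≤ ∑ i, a i ∧ (∑ i, a i) ≤ l)).card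
        * (((Finset.Iic k).filter (fun a => 1 ≤ ∑ i, a i ∧ (∑ i, a i) ≤ l')).filter
            (fun a => a ∈ B)).card := by
  have hsub : ∀ l, #{a ∈ Iic k | 1 ≤ ∑ i, a i ∧ ∑ i, a i ≤ l}
      = ∑ m ∈ Icc 1 l, #(boxLevel k m) := fun l => by
    simpa using card_filter_sublevel k l fun _ => True
  rw [hsub, hsub, card_filter_sublevel, card_filter_sublevel]
  refine sum_mul_sum_le_of_subset (Icc_subset_Icc_right hll'.le) fun m hm m' hm' => ?_
  refine card_boxLevel_mul_card_filter_le_of_le k B (fun b c hbc hb => hB b c hb hbc) ?_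
  simp only [mem_sdiff, mem_Icc] at hm hm'
  omega

/-- Up-set density increases along sublevel sets:
for an up-set `B ⊆ ℕ^d` and `1 ≤ l < l'`,
`|𝒮^𝐤_{l'}| · |B ∩ 𝒮^𝐤_l| ≤ |𝒮^𝐤_l| · |B ∩ 𝒮^𝐤_{l'}|`. -/
theorem stmt5 (d : ℕ) (hd : 1 ≤ d) (k : Fin d → ℕ) (hk : ∀ i, 0 < k i)
    (l l' : ℕ) (hl : 1 ≤ l) (hll' : l < l')
    (B : Set (Fin d → ℕ)) [DecidablePred (· ∈ B)]
    (hB : ∀ b c, b ∈ B → b ≤ c → c ∈ B) :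
    ((Finset.Iic k).filter (fun a => 1 ≤ ∑ i, a i ∧ (∑ i, a i) ≤ l')).card
        * (((Finset.Iic k).filter (fun a => 1 ≤ ∑ i, a i ∧ (∑ i, a i) ≤ l)).filter
            (fun a => a ∈ B)).card
      ≤ ((Finset.Iic k).filter (fun a => 1 ≤ ∑ i, a i ∧ (∑ i, a i) ≤ l)).card
        * (((Finset.Iic k).filter (fun a => 1 ≤ ∑ i, a i ∧ (∑ i, a i) ≤ l')).filter
            (fun a => a ∈ B)).card :=
  stmt5_general d k l l' hll' B hB
end

section
/- Let d ≥ 1 and let 𝒟 ⊂ ℕ^d be a finite down-set with respect to the product order ≼. Let A ⊆ 𝒟 and B ⊆ ℕ^d, and suppose for every 𝐛 = (b₁,…,b_d) ∈ B there exist inductively defined sets R_{l; n_{l+1},…,n_d; 𝐛} ⊂ ℕ satisfying: (1) whenever n_d ∉ R_{d;𝐛}, n_{d−1} ∉ R_{d−1;n_d;𝐛}, …, n_{l+1} ∉ R_{l+1;n_{l+2},…,n_d;𝐛}, the set R_{l;n_{l+1},…,n_d;𝐛} has at most b_l elements; and (2) for every 𝐚 = (a₁,…,a_d) ∈ A, if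 a_d ∉ R_{d;𝐛}, a_{d−1} ∉ R_{d−1;a_d;𝐛}, …, a₂ ∉ R_{2;a₃,…,a_d;𝐛}, then a₁ ∈ R_{1;a₂,…,a_d;𝐛}. Then |A| ≤ |𝒟 \ ↑B|, where ↑B is the up-set generated by B. -/
open Finset
open scoped Classical

/-!
Induct on `d` by fixing the last coordinate `t`. The slice of `A` at `t` lies in the slice of
`D`, and satisfies the hypotheses for those `b` whose (constant) last bad set `S_b` avoids `t`;
summing the inductive bounds over `t`, `|A|` is at most the number of `p ∈ D` with
`p_d ∈ S_b` for every `b ∈ B` with `(b₁,…,b_{d-1}) ≼ (p₁,…,p_{d-1})`. Fibering instead over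
`(p₁,…,p_{d-1})`, each fiber lies in an initial segment of `ℕ` and in every relevant `S_b`, of
size at most `b_d`, so it is no larger than the fiber of `D \ ↑B`, which is that initial segment
cut off at the least relevant `b_d`.
-/

theorem Finset.mem_iff_lt_card_of_isLowerSet {T : Finset ℕ} (hT : IsLowerSet (T : Set ℕ))
    (t : ℕ) : t ∈ T ↔ t < #T := by
  obtain h | ⟨a, ha⟩ := hT.eq_univ_or_Iio
  · exact absurd (h ▸ T.finite_toSet) Set.infinite_univ
  · have hT : T = range a := coe_injective (by simpa using ha)
    simp [hT]

theorem card_filter_forall_mem_le_card_filter_forall_lt {ι : Type*} {T : Finset ℕ}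
    (hT : IsLowerSet (T : Set ℕ)) {I : Set ι} {S : ι → Finset ℕ} {c : ι → ℕ}
    (hS : ∀ i ∈ I, #(S i) ≤ c i) :
    #{t ∈ T | ∀ i ∈ I, t ∈ S i} ≤ #{t ∈ T | ∀ i ∈ I, t < c i} := by
  set G := {t ∈ T | ∀ i ∈ I, t < c i}
  have hG : IsLowerSet (G : Set ℕ) := fun t s hst ht => by
    simp only [coe_filter, Set.mem_ofPred_eq, G] at ht ⊢
    exact ⟨hT hst ht.1, fun i hi => hst.trans_lt (ht.2 i hi)⟩
  by_cases hr : #G ∈ T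
  · obtain ⟨i, hi, hci⟩ : ∃ i ∈ I, c i ≤ #G := by
      by_contra! h
      exact lt_irrefl _ ((mem_iff_lt_card_of_isLowerSet hG _).mp (mem_filter.mpr ⟨hr, h⟩))
    calc _ ≤ #(S i) := card_le_card fun t ht => by simp only [mem_filter] at ht; exact ht.2 i hi
      _ ≤ #G := (hS i hi).trans hci
  · calc _ ≤ #T := card_filter_le _ _
      _ ≤ #G := not_lt.mp (mt (mem_iff_lt_card_of_isLowerSet hT _).mpr hr)

theorem Finset.card_le_card_of_forall_card_fiber_le {ι M : Type*} [DecidableEq M]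
    {s s' : Finset ι} (f : ι → M) (h : ∀ y, #{x ∈ s | f x = y} ≤ #{x ∈ s' | f x = y}) : #s ≤ #s' :=
  calc #s = ∑ y ∈ s.image f, #{x ∈ s | f x = y} := card_eq_sum_card_image f s
    _ ≤ ∑ y ∈ s.image f, #{x ∈ s' | f x = y} := sum_le_sum fun y _ => h y
    _ = #{x ∈ s' | f x ∈ s.image f} := sum_card_fiberwise_eq_card_filter _ _ _
    _ ≤ #s' := card_filter_le _ _

theorem Fin.le_snoc_iff {α : Type*} [Preorder α] {d : ℕ} {b : Fin (d + 1) → α}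
    {x : Fin d → α} {u : α} : b ≤ Fin.snoc x u ↔ Fin.init b ≤ x ∧ b (Fin.last d) ≤ u := by
  simp [Pi.le_def, Fin.forall_fin_succ', Fin.init]

section Slices

variable {α : Type*} [DecidableEq α] {d : ℕ}

def sliceLast (s : Finset (Fin (d + 1) → α)) (t : α) : Finset (Fin d → α) :=
  {p ∈ s | p (Fin.last d) = t}.image Fin.init

def fiberInit (s : Finset (Fin (d + 1) → α)) (x : Fin d → α) : Finset α :=
  {p ∈ s | Fin.init p = x}.image (· (Fin.last d))

variable {s s' : Finset (Fin (d + 1) → α)}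

@[simp]
theorem mem_sliceLast {t : α} {x : Fin d → α} : x ∈ sliceLast s t ↔ Fin.snoc x t ∈ s := by
  simp only [sliceLast, mem_image, mem_filter]
  constructor
  · rintro ⟨p, ⟨hp, rfl⟩, rfl⟩
    rwa [Fin.snoc_init_self]
  · exact fun h => ⟨_, ⟨h, Fin.snoc_last _ _⟩, Fin.init_snoc _ _⟩

@[simp]
theorem mem_fiberInit {x : Fin d → α} {u : α} : u ∈ fiberInit s x ↔ Fin.snoc x u ∈ s := by
  simp only [fiberInit, mem_image, mem_filter]
  constructor
  · rintro ⟨p, ⟨hp, rfl⟩, rfl⟩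
    rwa [Fin.snoc_init_self]
  · exact fun h => ⟨_, ⟨h, Fin.init_snoc _ _⟩, Fin.snoc_last _ _⟩

theorem card_sliceLast (t : α) : #(sliceLast s t) = #{p ∈ s | p (Fin.last d) = t} :=
  card_image_of_injOn fun p hp q hq hpq => by
    rw [← Fin.snoc_init_self p, ← Fin.snoc_init_self q, hpq, (mem_filter.mp hp).2,
      (mem_filter.mp hq).2]

theorem card_fiberInit (x : Fin d → α) : #(fiberInit s x) = #{p ∈ s | Fin.init p = x} :=
  card_image_of_injOn fun p hp q hq hpq => by
    rw [← Fin.snoc_init_self p, ← Fin.snoc_init_self q, (mem_filter.mp hp).2,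
      (mem_filter.mp hq).2]
    exact congrArg _ hpq

theorem card_le_card_of_forall_card_sliceLast_le
    (h : ∀ t, #(sliceLast s t) ≤ #(sliceLast s' t)) : #s ≤ #s' :=
  card_le_card_of_forall_card_fiber_le (· (Fin.last d)) fun t => by
    simpa only [card_sliceLast] using h t

theorem card_le_card_of_forall_card_fiberInit_le
    (h : ∀ x, #(fiberInit s x) ≤ #(fiberInit s' x)) : #s ≤ #s' :=
  card_le_card_of_forall_card_fiber_le Fin.init fun x => by
    simpa only [card_fiberInit] using h x

variable [Preorder α]

theorem IsLowerSet.sliceLast (hs : IsLowerSet (s : Set (Fin (d + 1) → α))) (t : α) :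
    IsLowerSet (sliceLast s t : Set (Fin d → α)) := fun x y hyx hx => by
  simp only [mem_coe, mem_sliceLast] at hx ⊢
  exact hs (Fin.le_snoc_iff.mpr ⟨by simpa using hyx, by simp⟩ : Fin.snoc y t ≤ Fin.snoc x t) hx

theorem IsLowerSet.fiberInit (hs : IsLowerSet (s : Set (Fin (d + 1) → α))) (x : Fin d → α) :
    IsLowerSet (fiberInit s x : Set α) := fun u v hvu hu => by
  simp only [mem_coe, mem_fiberInit] at hu ⊢
  exact hs (Fin.le_snoc_iff.mpr ⟨by simp, by simpa using hvu⟩ : Fin.snoc x v ≤ Fin.snoc x u) hu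

end Slices

/-- `R i n` is the paper's `R_{i; n_{i+1},…,n_d; b}`. -/
structure IsBadValueFamily {d : ℕ} (b : Fin d → ℕ) (R : Fin d → (Fin d → ℕ) → Finset ℕ) :
    Prop where
  eq_of_eqOn_gt : ∀ i n n', (∀ j, i < j → n j = n' j) → R i n = R i n'
  card_le : ∀ i n, (∀ j, i < j → n j ∉ R j n) → #(R i n) ≤ b i

namespace IsBadValueFamily

variable {d : ℕ} {b : Fin (d + 1) → ℕ} {R : Fin (d + 1) → (Fin (d + 1) → ℕ) → Finset ℕ}

theorem last_eq (hR : IsBadValueFamily b R) (n n' : Fin (d + 1) → ℕ) :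
    R (Fin.last d) n = R (Fin.last d) n' :=
  hR.eq_of_eqOn_gt _ n n' fun j hj => absurd hj (Fin.le_last j).not_gt

theorem card_last_le (hR : IsBadValueFamily b R) (n : Fin (d + 1) → ℕ) :
    #(R (Fin.last d) n) ≤ b (Fin.last d) :=
  hR.card_le _ n fun j hj => absurd hj (Fin.le_last j).not_gt

theorem fixLast (hR : IsBadValueFamily b R) {t : ℕ} (ht : t ∉ R (Fin.last d) 0) :
    IsBadValueFamily (Fin.init b) fun i n => R i.castSucc (Fin.snoc n t) where
  eq_of_eqOn_gt i n n' h := hR.eq_of_eqOn_gt _ _ _ fun j hj => by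
    cases j using Fin.lastCases with
    | last => simp
    | cast k => simpa using h k (Fin.castSucc_lt_castSucc_iff.mp hj)
  card_le i n h := hR.card_le _ _ fun j hj => by
    cases j using Fin.lastCases with
    | last => simpa [hR.last_eq _ 0] using ht
    | cast k => simpa using h k (Fin.castSucc_lt_castSucc_iff.mp hj)

end IsBadValueFamily

theorem card_filter_last_mem_le {ι : Type*} {d : ℕ} {D : Finset (Fin (d + 1) → ℕ)}
    (hD : IsLowerSet (D : Set (Fin (d + 1) → ℕ))) {I : Set ι} {b : ι → Fin (d + 1) → ℕ}
    {S : ι → Finset ℕ} (hS : ∀ i ∈ I, #(S i) ≤ b i (Fin.last d)) :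
    #(D.filter fun p : Fin (d + 1) → ℕ =>
        ∀ i ∈ I, Fin.init (b i) ≤ Fin.init p → p (Fin.last d) ∈ S i) ≤
      #{p ∈ D | ¬ ∃ i ∈ I, b i ≤ p} := by
  refine card_le_card_of_forall_card_fiberInit_le fun x => ?_
  have key := card_filter_forall_mem_le_card_filter_forall_lt (hD.fiberInit x)
    (I := {i ∈ I | Fin.init (b i) ≤ x}) fun i hi => hS i hi.1
  convert key using 2 <;> ext u <;> simp [Fin.le_snoc_iff]

theorem card_le_card_filter_not_exists_le {ι : Type*} (d : ℕ) {D A : Finset (Fin d → ℕ)}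
    (hD : IsLowerSet (D : Set (Fin d → ℕ))) (hA : A ⊆ D) (I : Set ι) (b : ι → Fin d → ℕ)
    (R : ι → Fin d → (Fin d → ℕ) → Finset ℕ) (hR : ∀ i ∈ I, IsBadValueFamily (b i) (R i))
    (hAR : ∀ i ∈ I, ∀ a ∈ A, ∃ j, a j ∈ R i j a) :
    #A ≤ #{p ∈ D | ¬ ∃ i ∈ I, b i ≤ p} := by
  induction d generalizing I with
  | zero =>
    obtain ⟨i, hi⟩ | rfl := I.eq_empty_or_nonempty.symm
    · obtain rfl : A = ∅ := eq_empty_of_forall_notMem fun a ha => by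
        obtain ⟨j, -⟩ := hAR i hi a ha
        exact j.elim0
      simp
    · simpa using card_le_card hA
  | succ d ih =>
    set S := fun i => R i (Fin.last d) 0
    calc #A ≤ #(D.filter fun p : Fin (d + 1) → ℕ =>
            ∀ i ∈ I, Fin.init (b i) ≤ Fin.init p → p (Fin.last d) ∈ S i) := by
          refine card_le_card_of_forall_card_sliceLast_le fun t => ?_
          have hAt := ih (hD.sliceLast t) (fun x hx => by simpa using hA (mem_sliceLast.mp hx))
            {i ∈ I | t ∉ S i} (fun i => Fin.init (b i))
            (fun i j n => R i j.castSucc (Fin.snoc n t))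
            (fun i hi => (hR i hi.1).fixLast hi.2) fun i hi a ha => by
              obtain ⟨j, hj⟩ := hAR i hi.1 _ (mem_sliceLast.mp ha)
              cases j using Fin.lastCases with
              | last => exact absurd (by simpa [(hR i hi.1).last_eq _ 0] using hj) hi.2
              | cast k => exact ⟨k, by simpa using hj⟩
          convert hAt using 2
          ext x
          simp only [mem_filter, mem_sliceLast, Fin.init_snoc, Fin.snoc_last, Set.mem_ofPred_eq]
          grind
      _ ≤ #{p ∈ D | ¬ ∃ i ∈ I, b i ≤ p} :=
          card_filter_last_mem_le hD fun i hi => (hR i hi).card_last_le 0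

/-- Abstract Schwartz–Zippel type lemma.
`D` is a finite down-set in `ℕ^d`, `A ⊆ D`, `B ⊆ ℕ^d`.
For each `b ∈ B` there is a family of "bad value" sets
`R b i n ⊂ ℕ` (depending only on the coordinates of `n` after `i`) such that:
(1) if `n j ∉ R b j n` for all `j > i`, then `|R b i n| ≤ b i`;
(2) for every `a ∈ A`, if `a j ∉ R b j a` for all `j > 0`, then `a 0 ∈ R b 0 a`.
Then `|A| ≤ |D \ ↑B|`. -/
theorem stmt6 (d : ℕ) (hd : 1 ≤ d)
    (D : Finset (Fin d → ℕ))
    (hD : ∀ p q : Fin d → ℕ, q ∈ D → p ≤ q → p ∈ D)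
    (A : Finset (Fin d → ℕ)) (hA : A ⊆ D)
    (B : Set (Fin d → ℕ))
    (R : (Fin d → ℕ) → Fin d → (Fin d → ℕ) → Finset ℕ)
    (hdep : ∀ b ∈ B, ∀ (i : Fin d) (n n' : Fin d → ℕ),
      (∀ j, i < j → n j = n' j) → R b i n = R b i n')
    (h1 : ∀ b ∈ B, ∀ (i : Fin d) (n : Fin d → ℕ),
      (∀ j, i < j → n j ∉ R b j n) → (R b i n).card ≤ b i)
    (h2 : ∀ b ∈ B, ∀ a ∈ A,
      (∀ j : Fin d, 0 < j.1 → a j ∉ R b j a) →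
        a ⟨0, by omega⟩ ∈ R b ⟨0, by omega⟩ a) :
    A.card ≤ (D.filter (fun p : Fin d → ℕ => ¬ ∃ b ∈ B, b ≤ p)).card := by
  refine card_le_card_filter_not_exists_le d (fun q p hpq hq => hD p q hq hpq) hA B id R
    (fun b hb => ⟨hdep b hb, h1 b hb⟩) fun b hb a ha => ?_
  by_contra! hgood
  exact hgood _ (h2 b hb a ha fun j _ => hgood j)
end

section
/- Fix d ≥ 1, k ≥ 2, and 𝐤 ∈ ℕ_{>0}^d, and for 1 ≤ l ≤ k set n_l := |𝒮^𝐤_l ∩ {|𝐚| ≤ k}| (cardinality of the sublevel set of degree l within degree ≤ k) and 𝒦_l := Σ_{𝐚, 1≤|𝐚|≤l, 𝐚≼𝐤} |𝐚|. Define α_l ∈ ℝ by n_k/n_l = α_l·(n_k/n_{l+1}) + (1−α_l)·(𝒦_k/𝒦_l) for 1 ≤ l < k, and β_l by 𝒦_k/𝒦_l = (1−β_l)·(𝒦_k/𝒦_{l−1}) + β_l·(n_k/n_l) for 1 < l < k, with β₁ := 1, α₀ := 0, β_k := 1. Define a linear map ℳ on ℝ^{2(k−1)} with coordinates indexed by q(1),…,q(k−1),t(1),…,t(k−1)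 by: (ℳv)_{q(l)} = (1−α_l)v_{t(l)} + ((l+2)/(l+1))(1−β_{l+1})v_{q(l+1)} for 1 ≤ l ≤ k−2; (ℳv)_{q(k−1)} = (1−α_{k−1})v_{t(k−1)}; (ℳv)_{t(l)} = ((l+1)/l)β_l v_{q(l)} + α_{l−1}v_{t(l−1)} for 2 ≤ l ≤ k−1; (ℳv)_{t(1)} = 2β₁v_{q(1)}. Then the vector v with v_{q(l)} = 𝒦_l/(l+1) and v_{t(l)} = n_l satisfies ℳv = v. -/
/-!
Put `D_l = 𝒦_K n_{l+1} - n_K 𝒦_l`. Cleared of denominators, the relations defining `α_l` and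
`β_{l+1}` read `(1 - α_l) n_l D_l = n_K 𝒦_l (n_{l+1} - n_l)` and
`β_{l+1} 𝒦_{l+1} D_l = 𝒦_K n_{l+1} (𝒦_{l+1} - 𝒦_l)`. Since `𝒦_{l+1} - 𝒦_l = (l+1)(n_{l+1} - n_l)`,
combining them and cancelling `D_l` gives the `t(l+1)` coordinate. Here `D_l > 0` because the
average degree `𝒦_l / n_l` of the sublevel set is at most `l`, while the elements added up to
level `K` have degree above `l`. The `q(l)` coordinate is the recurrence for `𝒦` minus the
`t(l+1)` coordinate.
-/

open Finset

theorem card_mul_sum_lt_sum_mul_card_of_subset {ι : Type*} [DecidableEq ι] {s t : Finset ι}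
    {f : ι → ℕ} {c : ℕ} (hst : s ⊆ t) (hs : s.Nonempty) (hts : (t \ s).Nonempty)
    (hfs : ∀ x ∈ s, f x ≤ c) (hft : ∀ x ∈ t \ s, c < f x) :
    #t * ∑ x ∈ s, f x < (∑ x ∈ t, f x) * #s := by
  have hsum_s : ∑ x ∈ s, f x ≤ #s * c := by simpa using sum_le_card_nsmul s f c hfs
  have hsum_ts : #(t \ s) * c < ∑ x ∈ t \ s, f x := by
    simpa using sum_lt_sum_of_nonempty hts hft
  rw [← card_sdiff_add_card_eq_card hst, ← sum_sdiff hst]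
  calc (#(t \ s) + #s) * ∑ x ∈ s, f x
      ≤ #(t \ s) * (#s * c) + #s * ∑ x ∈ s, f x := by rw [add_mul]; gcongr
    _ = #s * (#(t \ s) * c) + #s * ∑ x ∈ s, f x := by ring
    _ < #s * ∑ x ∈ t \ s, f x + #s * ∑ x ∈ s, f x := by gcongr
    _ = (∑ x ∈ t \ s, f x + ∑ x ∈ s, f x) * #s := by ring

def sublevel {d : ℕ} (k : Fin d → ℕ) (K l : ℕ) : Finset (Fin d → ℕ) :=
  (Finset.Iic k).filter (fun a : Fin d → ℕ => 1 ≤ ∑ i, a i ∧ (∑ i, a i) ≤ min l K)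

section Sublevel

variable {d : ℕ} {k : Fin d → ℕ} {K l m : ℕ} {a : Fin d → ℕ}

theorem mem_sublevel : a ∈ sublevel k K l ↔ a ≤ k ∧ 1 ≤ ∑ i, a i ∧ ∑ i, a i ≤ min l K := by
  simp [sublevel]

theorem sublevel_mono : Monotone (sublevel k K) := fun l m hlm a ha => by
  rw [mem_sublevel] at ha ⊢
  exact ⟨ha.1, ha.2.1, ha.2.2.trans (min_le_min_right K hlm)⟩

theorem sublevel_nonempty {i : Fin d} (hi : 0 < k i) (hl : 1 ≤ l) (hK : 1 ≤ K) :
    (sublevel k K l).Nonempty := by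
  refine ⟨Pi.single i 1, mem_sublevel.2 ⟨fun j => ?_, ?_⟩⟩
  · by_cases hj : j = i
    · subst hj; simpa [Nat.one_le_iff_ne_zero] using hi.ne'
    · simp [hj]
  · simp only [Fintype.sum_pi_single']
    omega

theorem min_lt_degree_of_mem_sdiff (ha : a ∈ sublevel k K m \ sublevel k K l) :
    min l K < ∑ i, a i := by
  obtain ⟨ham, hal⟩ := mem_sdiff.1 ha
  by_contra! h
  exact hal (mem_sublevel.2 ⟨(mem_sublevel.1 ham).1, (mem_sublevel.1 ham).2.1, h⟩)

theorem sum_degree_sublevel_succ (hl : l + 1 ≤ K) :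
    ∑ a ∈ sublevel k K (l + 1), ∑ i, a i + (l + 1) * #(sublevel k K l)
      = ∑ a ∈ sublevel k K l, ∑ i, a i + (l + 1) * #(sublevel k K (l + 1)) := by
  have hsub := sublevel_mono (k := k) (K := K) l.le_succ
  have hdeg : ∀ a ∈ sublevel k K (l + 1) \ sublevel k K l, ∑ i, a i = l + 1 := fun a ha => by
    have hlt := min_lt_degree_of_mem_sdiff ha
    have hle := (mem_sublevel.1 (mem_sdiff.1 ha).1).2.2
    omega
  rw [← sum_sdiff hsub, sum_congr rfl hdeg, sum_const, smul_eq_mul,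
    ← card_sdiff_add_card_eq_card hsub]
  ring

theorem card_le_sum_degree_sublevel : #(sublevel k K l) ≤ ∑ a ∈ sublevel k K l, ∑ i, a i := by
  simpa using card_nsmul_le_sum _ _ 1 fun a ha => (mem_sublevel.1 ha).2.1

theorem sum_degree_sublevel_one : ∑ a ∈ sublevel k K 1, ∑ i, a i = #(sublevel k K 1) := by
  rw [card_eq_sum_ones]
  exact sum_congr rfl fun a ha => by have := (mem_sublevel.1 ha).2; omega

theorem card_mul_sum_degree_sublevel_lt (hlm : l ≤ m) (hl : (sublevel k K l).Nonempty)
    (hcard : #(sublevel k K l) < #(sublevel k K m)) :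
    #(sublevel k K m) * ∑ a ∈ sublevel k K l, ∑ i, a i
      < (∑ a ∈ sublevel k K m, ∑ i, a i) * #(sublevel k K l) := by
  have hsub := sublevel_mono (k := k) (K := K) hlm
  refine card_mul_sum_lt_sum_mul_card_of_subset hsub hl ?_
    (fun a ha => (mem_sublevel.1 ha).2.2) fun a ha => min_lt_degree_of_mem_sdiff ha
  rw [← card_pos, card_sdiff_of_subset hsub]
  omega

end Sublevel

theorem alpha_weight_eq {N C n n' c α : ℝ} (hn : n ≠ 0) (hn' : n' ≠ 0) (hc : c ≠ 0)
    (hα : N / n = α * (N / n') + (1 - α) * (C / c)) :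
    (1 - α) * n * (C * n' - N * c) = N * c * (n' - n) := by
  field_simp at hα
  linear_combination -hα

theorem beta_weight_eq {N C n' c c' β : ℝ} (hn' : n' ≠ 0) (hc : c ≠ 0) (hc' : c' ≠ 0)
    (hβ : C / c' = (1 - β) * (C / c) + β * (N / n')) :
    β * c' * (C * n' - N * c) = C * n' * (c' - c) := by
  field_simp at hβ
  linear_combination hβ

theorem t_relation_of_weight_eqs {N C n n' c c' m α β : ℝ} (hD : C * n' - N * c ≠ 0)
    (hc' : c' = c + m * (n' - n))
    (hα : (1 - α) * n * (C * n' - N * c) = N * c * (n' - n))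
    (hβ : β * c' * (C * n' - N * c) = C * n' * (c' - c)) :
    m * n' = β * c' + m * α * n := by
  refine mul_right_cancel₀ hD ?_
  linear_combination m * hα - hβ - C * n' * hc'

-- What the identities use about `n_l = #(sublevel k K l)` and its total degree `𝒦_l`.
structure IsSublevelProfile (n 𝒦 : ℕ → ℝ) (K : ℕ) : Prop where
  n_pos : ∀ l, 1 ≤ l → 0 < n l
  n_mono : Monotone n
  n_le : ∀ l, n l ≤ 𝒦 l
  𝒦_one : 𝒦 1 = n 1
  𝒦_succ : ∀ l, l + 1 ≤ K → 𝒦 (l + 1) = 𝒦 l + (l + 1) * (n (l + 1) - n l)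
  ratio_lt : ∀ l, 1 ≤ l → l < K → n l < n K → n K * 𝒦 l < 𝒦 K * n l

namespace IsSublevelProfile

variable {n 𝒦 : ℕ → ℝ} {K : ℕ}

theorem 𝒦_pos (h : IsSublevelProfile n 𝒦 K) {l : ℕ} (hl : 1 ≤ l) : 0 < 𝒦 l :=
  (h.n_pos l hl).trans_le (h.n_le l)

theorem cross_pos (h : IsSublevelProfile n 𝒦 K) {l : ℕ} (hl : 1 ≤ l) (hlK : l < K)
    (hnK : n l < n K) : 0 < 𝒦 K * n (l + 1) - n K * 𝒦 l := by
  have hratio := h.ratio_lt l hl hlK hnK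
  have hmono : 𝒦 K * n l ≤ 𝒦 K * n (l + 1) :=
    mul_le_mul_of_nonneg_left (h.n_mono l.le_succ) (h.𝒦_pos (hl.trans hlK.le)).le
  linarith

theorem t_relation (h : IsSublevelProfile n 𝒦 K) {l : ℕ} {α β : ℝ} (hl : 1 ≤ l) (hlK : l < K)
    (hnK : n l < n K) (hα : n K / n l = α * (n K / n (l + 1)) + (1 - α) * (𝒦 K / 𝒦 l))
    (hβ : β * 𝒦 (l + 1) * (𝒦 K * n (l + 1) - n K * 𝒦 l)
      = 𝒦 K * n (l + 1) * (𝒦 (l + 1) - 𝒦 l)) :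
    ((l : ℝ) + 1) * n (l + 1) = β * 𝒦 (l + 1) + (l + 1) * α * n l :=
  t_relation_of_weight_eqs (h.cross_pos hl hlK hnK).ne' (h.𝒦_succ l hlK)
    (alpha_weight_eq (h.n_pos l hl).ne' (h.n_pos (l + 1) (by omega)).ne' (h.𝒦_pos hl).ne' hα) hβ

theorem t_relation_of_lt (h : IsSublevelProfile n 𝒦 K) {α β : ℕ → ℝ} {l : ℕ} (hl : 1 ≤ l)
    (hlK : l + 1 < K) (hnK : n l < n K)
    (hα : n K / n l = α l * (n K / n (l + 1)) + (1 - α l) * (𝒦 K / 𝒦 l))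
    (hβ : 𝒦 K / 𝒦 (l + 1) = (1 - β (l + 1)) * (𝒦 K / 𝒦 l) + β (l + 1) * (n K / n (l + 1))) :
    ((l : ℝ) + 1) * n (l + 1) = β (l + 1) * 𝒦 (l + 1) + (l + 1) * α l * n l :=
  h.t_relation hl (by omega) hnK hα <| beta_weight_eq (h.n_pos (l + 1) (by omega)).ne'
    (h.𝒦_pos hl).ne' (h.𝒦_pos (by omega)).ne' hβ

theorem q_coord (h : IsSublevelProfile n 𝒦 K) {α β : ℕ → ℝ}
    (hnK : ∀ l, 1 ≤ l → l < K → n l < n K)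
    (hα : ∀ l, 1 ≤ l → l < K →
      n K / n l = α l * (n K / n (l + 1)) + (1 - α l) * (𝒦 K / 𝒦 l))
    (hβ : ∀ l, 1 < l → l < K →
      𝒦 K / 𝒦 l = (1 - β l) * (𝒦 K / 𝒦 (l - 1)) + β l * (n K / n l)) :
    ∀ l, 1 ≤ l → l ≤ K - 2 →
      𝒦 l / (l + 1)
        = (1 - α l) * n l
          + (((l : ℝ) + 2) / ((l : ℝ) + 1)) * (1 - β (l + 1)) * (𝒦 (l + 1) / (l + 2)) := by
  intro l hl hlK
  have ht := h.t_relation_of_lt hl (by omega) (hnK l hl (by omega)) (hα l hl (by omega))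
    (hβ (l + 1) (by omega) (by omega))
  have hs := h.𝒦_succ l (by omega)
  field_simp
  linear_combination -hs - ht

theorem q_coord_last (h : IsSublevelProfile n 𝒦 K) {α : ℕ → ℝ} (hK : 2 ≤ K)
    (hnK : ∀ l, 1 ≤ l → l < K → n l < n K)
    (hα : ∀ l, 1 ≤ l → l < K →
      n K / n l = α l * (n K / n (l + 1)) + (1 - α l) * (𝒦 K / 𝒦 l)) :
    𝒦 (K - 1) / ((K : ℝ) - 1 + 1) = (1 - α (K - 1)) * n (K - 1) := by
  obtain ⟨l, rfl⟩ : ∃ l, K = l + 1 := ⟨K - 1, by omega⟩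
  -- `β_K = 1` turns the β-relation at `K` into an identity
  have ht := h.t_relation (β := 1) (by omega) l.lt_succ_self (hnK l (by omega) l.lt_succ_self)
    (hα l (by omega) l.lt_succ_self) (by ring)
  have hs := h.𝒦_succ l le_rfl
  rw [Nat.add_sub_cancel]
  push_cast
  field_simp
  linear_combination -hs - ht

theorem t_coord (h : IsSublevelProfile n 𝒦 K) {α β : ℕ → ℝ}
    (hnK : ∀ l, 1 ≤ l → l < K → n l < n K)
    (hα : ∀ l, 1 ≤ l → l < K →
      n K / n l = α l * (n K / n (l + 1)) + (1 - α l) * (𝒦 K / 𝒦 l))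
    (hβ : ∀ l, 1 < l → l < K →
      𝒦 K / 𝒦 l = (1 - β l) * (𝒦 K / 𝒦 (l - 1)) + β l * (n K / n l)) :
    ∀ l, 2 ≤ l → l ≤ K - 1 →
      n l = (((l : ℝ) + 1) / (l : ℝ)) * β l * (𝒦 l / (l + 1)) + α (l - 1) * n (l - 1) := by
  intro l hl hlK
  obtain ⟨j, rfl⟩ : ∃ j, l = j + 1 := ⟨l - 1, by omega⟩
  have ht := h.t_relation_of_lt (by omega) (by omega) (hnK j (by omega) (by omega))
    (hα j (by omega) (by omega)) (hβ (j + 1) (by omega) (by omega))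
  rw [Nat.add_sub_cancel]
  push_cast
  field_simp
  linear_combination ht

end IsSublevelProfile

theorem isSublevelProfile_sublevel {d : ℕ} {k : Fin d → ℕ} {K : ℕ} {i : Fin d} (hi : 0 < k i)
    (hK : 1 ≤ K) :
    IsSublevelProfile (fun l => (#(sublevel k K l) : ℝ))
      (fun l => ((∑ a ∈ sublevel k K l, ∑ i, a i : ℕ) : ℝ)) K where
  n_pos l hl := by exact_mod_cast (sublevel_nonempty hi hl hK).card_pos
  n_mono := Nat.mono_cast.comp fun _ _ hlm => card_le_card (sublevel_mono hlm)
  n_le l := by exact_mod_cast card_le_sum_degree_sublevel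
  𝒦_one := by exact_mod_cast sum_degree_sublevel_one
  𝒦_succ l hl := by
    have := congrArg (Nat.cast (R := ℝ)) (sum_degree_sublevel_succ (k := k) hl)
    push_cast at this ⊢
    linarith
  ratio_lt l hl hlK hlt := by
    exact_mod_cast card_mul_sum_degree_sublevel_lt hlK.le (sublevel_nonempty hi hl hK)
      (by exact_mod_cast hlt)

theorem stmt10_general (d K : ℕ) (hd : 1 ≤ d) (hK : 2 ≤ K)
    (k : Fin d → ℕ) (hk : ∀ i, 0 < k i)
    (n 𝒦 : ℕ → ℝ)
    (hn : ∀ l, n l = (((Finset.Iic k).filter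
      (fun a : Fin d → ℕ => 1 ≤ ∑ i, a i ∧ (∑ i, a i) ≤ min l K)).card : ℝ))
    (h𝒦 : ∀ l, 𝒦 l = ((∑ a ∈ (Finset.Iic k).filter
      (fun a : Fin d → ℕ => 1 ≤ ∑ i, a i ∧ (∑ i, a i) ≤ min l K), ∑ i, a i : ℕ) : ℝ))
    -- strictness, making `α`, `β` well defined
    (hstrict : ∀ l, 1 ≤ l → l < K → n l < n K ∧ 𝒦 l < 𝒦 K)
    -- implicit definitions of `α_l` and `β_l`
    (α β : ℕ → ℝ)
    (hα : ∀ l, 1 ≤ l → l < K →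
      n K / n l = α l * (n K / n (l + 1)) + (1 - α l) * (𝒦 K / 𝒦 l))
    (hβ : ∀ l, 1 < l → l < K →
      𝒦 K / 𝒦 l = (1 - β l) * (𝒦 K / 𝒦 (l - 1)) + β l * (n K / n l))
    (hβ1 : β 1 = 1) :
    -- `ℳ v = v` in the `q(l)` coordinates
    (∀ l, 1 ≤ l → l ≤ K - 2 →
      𝒦 l / (l + 1)
        = (1 - α l) * n l
          + (((l : ℝ) + 2) / ((l : ℝ) + 1)) * (1 - β (l + 1)) * (𝒦 (l + 1) / (l + 2)))
    ∧ (𝒦 (K - 1) / ((K : ℝ) - 1 + 1) = (1 - α (K - 1)) * n (K - 1))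
    -- `ℳ v = v` in the `t(l)` coordinates
    ∧ (∀ l, 2 ≤ l → l ≤ K - 1 →
      n l = (((l : ℝ) + 1) / (l : ℝ)) * β l * (𝒦 l / (l + 1)) + α (l - 1) * n (l - 1))
    ∧ (n 1 = 2 * β 1 * (𝒦 1 / 2)) := by
  have hprof : IsSublevelProfile n 𝒦 K := by
    obtain rfl : n = _ := funext hn
    obtain rfl : 𝒦 = _ := funext h𝒦
    exact isSublevelProfile_sublevel (hk ⟨0, hd⟩) (by omega)
  have hnK : ∀ l, 1 ≤ l → l < K → n l < n K := fun l hl hlK => (hstrict l hl hlK).1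
  refine ⟨hprof.q_coord hnK hα hβ, ?_, hprof.t_coord hnK hα hβ, ?_⟩
  · exact hprof.q_coord_last hK hnK hα
  · rw [hβ1, hprof.𝒦_one]
    ring

/-- The Perron–Frobenius fixed-point theorem for the induction-on-scales
matrix `ℳ`: the vector `v` with `v_{q(l)} = 𝒦_l/(l+1)`, `v_{t(l)} = n_l`
satisfies `ℳ v = v`, written out coordinatewise. -/
theorem stmt10 (d K : ℕ) (hd : 1 ≤ d) (hK : 2 ≤ K)
    (k : Fin d → ℕ) (hk : ∀ i, 0 < k i)
    (n 𝒦 : ℕ → ℝ)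
    (hn : ∀ l, n l = (((Finset.Iic k).filter
      (fun a : Fin d → ℕ => 1 ≤ ∑ i, a i ∧ (∑ i, a i) ≤ min l K)).card : ℝ))
    (h𝒦 : ∀ l, 𝒦 l = ((∑ a ∈ (Finset.Iic k).filter
      (fun a : Fin d → ℕ => 1 ≤ ∑ i, a i ∧ (∑ i, a i) ≤ min l K), ∑ i, a i : ℕ) : ℝ))
    -- strictness, making `α`, `β` well defined
    (hstrict : ∀ l, 1 ≤ l → l < K → n l < n K ∧ 𝒦 l < 𝒦 K)
    -- implicit definitions of `α_l` and `β_l`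
    (α β : ℕ → ℝ)
    (hα : ∀ l, 1 ≤ l → l < K →
      n K / n l = α l * (n K / n (l + 1)) + (1 - α l) * (𝒦 K / 𝒦 l))
    (hβ : ∀ l, 1 < l → l < K →
      𝒦 K / 𝒦 l = (1 - β l) * (𝒦 K / 𝒦 (l - 1)) + β l * (n K / n l))
    (hβ1 : β 1 = 1) (hα0 : α 0 = 0) (hβK : β K = 1) :
    -- `ℳ v = v` in the `q(l)` coordinates
    (∀ l, 1 ≤ l → l ≤ K - 2 →
      𝒦 l / (l + 1)
        = (1 - α l) * n l
          + (((l : ℝ) + 2) / ((l : ℝ) + 1)) * (1 - β (l + 1)) * (𝒦 (l + 1) / (l + 2)))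
    ∧ (𝒦 (K - 1) / ((K : ℝ) - 1 + 1) = (1 - α (K - 1)) * n (K - 1))
    -- `ℳ v = v` in the `t(l)` coordinates
    ∧ (∀ l, 2 ≤ l → l ≤ K - 1 →
      n l = (((l : ℝ) + 1) / (l : ℝ)) * β l * (𝒦 l / (l + 1)) + α (l - 1) * n (l - 1))
    ∧ (n 1 = 2 * β 1 * (𝒦 1 / 2)) :=
  stmt10_general d K hd hK k hk n 𝒦 hn h𝒦 hstrict α β hα hβ hβ1
end

section
/- With the notation of the fixed-point theorem (n_l, 𝒦_l, α_{k−1}, and the vector v with v_{q(l)} = 𝒦_l/(l+1), v_{t(k−1)} = n_{k−1}), for d ≥ 1 and k ≥ 2 one has Σ_{l=1}^{k−1} v_{q(l)}/l = v_{t(k−1)}·α_{k−1}; explicitly, Σ_{l=1}^{k−1} 𝒦_l/(l(l+1)) = n_{k−1} − 𝒦_{k−1}/k. -/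
/-!
Passing from the sublevel set `𝒮_{j-1}` to `𝒮_j` adds the multi-indices of weight exactly `j`,
so `𝒦_j - 𝒦_{j-1} = j (n_j - n_{j-1})`. Summation by parts then turns
`Σ_{l<k} 𝒦_l / (l(l+1)) = Σ_l 𝒦_l (1/l - 1/(l+1))` into `n_{k-1} - 𝒦_{k-1}/k`. The same increment
relation at `j = k` makes the defining relation of `α_{k-1}` equivalent to
`𝒦_{k-1} = (1 - α_{k-1}) k n_{k-1}`, which is the first identity.
-/

open Finset

namespace Sublevel

variable {ι : Type*} (s : Finset ι) (w : ι → ℕ)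

/-- For `s = Iic k` and `w a = ∑ i, a i` this is the sublevel set `𝒮_l`. -/
def sublevel (l : ℕ) : Finset ι := s.filter fun a => 1 ≤ w a ∧ w a ≤ l

@[simp]
lemma sublevel_zero : sublevel s w 0 = ∅ :=
  filter_false_of_mem fun _ _ => by omega

lemma sublevel_succ_eq_union [DecidableEq ι] (j : ℕ) :
    sublevel s w (j + 1) = sublevel s w j ∪ s.filter (fun a => w a = j + 1) := by
  ext a
  by_cases ha : a ∈ s <;> simp only [sublevel, mem_union, mem_filter, ha, true_and, false_and,
    or_self]
  constructor <;> intro h <;> omega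

lemma disjoint_sublevel_filter_eq_succ (j : ℕ) :
    Disjoint (sublevel s w j) (s.filter fun a => w a = j + 1) :=
  disjoint_filter_filter' _ _ fun _ h₁ h₂ a ha => by
    have := h₁ a ha
    have := h₂ a ha
    omega

lemma card_sublevel_succ (j : ℕ) :
    #(sublevel s w (j + 1)) = #(sublevel s w j) + #(s.filter fun a => w a = j + 1) := by
  classical
  rw [sublevel_succ_eq_union, card_union_of_disjoint (disjoint_sublevel_filter_eq_succ s w j)]

lemma sum_sublevel_succ (j : ℕ) :
    ∑ a ∈ sublevel s w (j + 1), w a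
      = ∑ a ∈ sublevel s w j, w a + #(s.filter fun a => w a = j + 1) * (j + 1) := by
  classical
  rw [sublevel_succ_eq_union, sum_union (disjoint_sublevel_filter_eq_succ s w j),
    sum_congr rfl fun a ha => (mem_filter.mp ha).2, sum_const, smul_eq_mul]

lemma sum_sublevel_succ_sub_sum (j : ℕ) :
    ((∑ a ∈ sublevel s w (j + 1), w a : ℕ) : ℝ) - (∑ a ∈ sublevel s w j, w a : ℕ)
      = (j + 1) * ((#(sublevel s w (j + 1)) : ℝ) - #(sublevel s w j)) := by
  rw [sum_sublevel_succ, card_sublevel_succ]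
  push_cast
  ring

lemma card_sublevel_le_sum (l : ℕ) : #(sublevel s w l) ≤ ∑ a ∈ sublevel s w l, w a := by
  simpa using card_nsmul_le_sum (sublevel s w l) w 1 fun a ha => (mem_filter.mp ha).2.1

lemma single_mem_sublevel_Iic {d : ℕ} {k : Fin d → ℕ} {i : Fin d} (hk : 0 < k i) {l : ℕ}
    (hl : 1 ≤ l) : Pi.single i 1 ∈ sublevel (Iic k) (fun a => ∑ j, a j) l := by
  refine mem_filter.mpr ⟨mem_Iic.mpr fun j => ?_, ?_⟩
  · by_cases h : j = i
    · subst h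
      simp only [Pi.single_eq_same]
      exact hk
    · simp [h]
  · simpa [sum_pi_single'] using hl

end Sublevel

theorem sum_Icc_div_mul_succ_eq_sub {n W : ℕ → ℝ} {m : ℕ} (hn : n 0 = 0) (hW : W 0 = 0)
    (hstep : ∀ j < m, W (j + 1) - W j = (j + 1) * (n (j + 1) - n j)) :
    ∑ l ∈ Icc 1 m, W l / (l * (l + 1)) = n m - W m / (m + 1) := by
  induction m with
  | zero => simp [hn, hW]
  | succ m ih =>
    rw [sum_Icc_succ_top (by omega), ih fun j hj => hstep j (by omega)]
    have hW_succ : W (m + 1) = W m + (m + 1) * (n (m + 1) - n m) := by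
      linarith [hstep m (by omega)]
    rw [hW_succ]
    push_cast
    field_simp
    ring

theorem mul_eq_sub_div_of_div_eq_add_mul {n n' W W' c α : ℝ} (hn : n ≠ 0) (hW : W ≠ 0)
    (hne : W ≠ W') (hstep : W' - W = c * (n' - n)) (hα : n' / n = α + (1 - α) * (W' / W)) :
    n * α = n - W / c := by
  have hc : c ≠ 0 := by
    rintro rfl
    exact hne (by linarith)
  have hn' : n' - n ≠ 0 := by
    intro h
    exact hne (by linarith [hstep.trans (by rw [h, mul_zero])])
  have hW_eq : W = (1 - α) * c * n := by
    field_simp at hα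
    apply mul_right_cancel₀ hn'
    linear_combination hα + (1 - α) * n * hstep
  rw [hW_eq]
  field_simp
  ring

open Sublevel in
/-- `Σ_{l=1}^{k−1} v_{q(l)}/l = v_{t(k−1)}·α_{k−1}`; explicitly,
`Σ_{l=1}^{k−1} 𝒦_l/(l(l+1)) = n_{k−1} − 𝒦_{k−1}/k`. -/
theorem stmt11 (d K : ℕ) (hd : 1 ≤ d) (hK : 2 ≤ K)
    (k : Fin d → ℕ) (hk : ∀ i, 0 < k i)
    (n 𝒦 : ℕ → ℝ)
    (hn : ∀ l, n l = (((Finset.Iic k).filter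
      (fun a : Fin d → ℕ => 1 ≤ ∑ i, a i ∧ (∑ i, a i) ≤ min l K)).card : ℝ))
    (h𝒦 : ∀ l, 𝒦 l = ((∑ a ∈ (Finset.Iic k).filter
      (fun a : Fin d → ℕ => 1 ≤ ∑ i, a i ∧ (∑ i, a i) ≤ min l K), ∑ i, a i : ℕ) : ℝ))
    (α : ℝ)
    (hne : 𝒦 (K - 1) ≠ 𝒦 K)
    -- defining relation of `α_{k−1}`
    (hα : n K / n (K - 1) = α + (1 - α) * (𝒦 K / 𝒦 (K - 1))) :
    (∑ l ∈ Finset.Icc 1 (K - 1), (𝒦 l / (l + 1)) / (l : ℝ)) = n (K - 1) * α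
    ∧ (∑ l ∈ Finset.Icc 1 (K - 1), 𝒦 l / ((l : ℝ) * ((l : ℝ) + 1)))
        = n (K - 1) - 𝒦 (K - 1) / (K : ℝ) := by
  obtain ⟨m, rfl⟩ : ∃ m, K = m + 1 := ⟨K - 1, by omega⟩
  simp only [add_tsub_cancel_right] at hne hα ⊢
  set S := sublevel (Iic k) (fun a : Fin d → ℕ => ∑ i, a i)
  have hn' : ∀ l ≤ m + 1, n l = #(S l) := fun l hl => by rw [hn, min_eq_left hl]; rfl
  have h𝒦' : ∀ l ≤ m + 1, 𝒦 l = (∑ a ∈ S l, ∑ i, a i : ℕ) := fun l hl => by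
    rw [h𝒦, min_eq_left hl]; rfl
  have hstep : ∀ j < m + 1, 𝒦 (j + 1) - 𝒦 j = (j + 1) * (n (j + 1) - n j) := fun j hj => by
    rw [hn' j hj.le, hn' (j + 1) hj, h𝒦' j hj.le, h𝒦' (j + 1) hj]
    exact sum_sublevel_succ_sub_sum _ _ j
  have hmem : Pi.single ⟨0, hd⟩ 1 ∈ S m := single_mem_sublevel_Iic (hk _) (by omega)
  have hn_pos : 0 < n m := by
    rw [hn' m (by omega)]
    exact_mod_cast card_pos.mpr ⟨_, hmem⟩
  have h𝒦_pos : 0 < 𝒦 m := by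
    rw [h𝒦' m (by omega)]
    exact_mod_cast (card_pos.mpr ⟨_, hmem⟩).trans_le (card_sublevel_le_sum _ _ m)
  have habel : ∑ l ∈ Icc 1 m, 𝒦 l / (l * (l + 1)) = n m - 𝒦 m / (m + 1) :=
    sum_Icc_div_mul_succ_eq_sub (by simp [hn' 0, S]) (by simp [h𝒦' 0, S])
      fun j hj => hstep j (by omega)
  push_cast
  refine ⟨?_, habel⟩
  rw [mul_eq_sub_div_of_div_eq_add_mul hn_pos.ne' h𝒦_pos.ne' hne (hstep m (by omega)) hα,
    ← habel]
  exact sum_congr rfl fun l _ => by rw [div_div, mul_comm ((l : ℝ) + 1)]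
end

section
/- Let Λ_{j,l} denote the number of 𝐚 ∈ ℕ^j with 𝐚 ≼ (k₁,…,k_j) and |𝐚| = l, where k₁ ≤ ⋯ ≤ k_j. Then for all k ≥ 3, Λ_{j,k−2}·Λ_{j,2} ≥ 2·Λ_{j,k} − min(Λ_{j,k−1}, Λ_{j,k−2}). -/
/-!
Double counting of the pairs `(𝐚, 𝐛)` with `𝐚 ≼ 𝐤`, `|𝐚| = K` and `𝐛 ≼ 𝐚`, `|𝐛| = 2`: the map
`(𝐚, 𝐛) ↦ (𝐚 - 𝐛, 𝐛)` is injective into `Λ_{K-2} × Λ_2`. Every `𝐚` with two nonzero entries has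
at least two such `𝐛` (one being `e_i + e_j`, the other not having `j`-coordinate `1`), while
each remaining `𝐚 = K e_m` has at least one; these are at most as many as the indices `m` with
`K ≤ k_m`, and `m ↦ l e_m` embeds those into `Λ_l` for every `1 ≤ l ≤ K`.
-/
open Finset

theorem Pi.single_le_iff {ι M : Type*} [DecidableEq ι] [AddMonoid M] [PartialOrder M]
    [CanonicallyOrderedAdd M] {i : ι} {x : M} {f : ι → M} : Pi.single i x ≤ f ↔ x ≤ f i := by
  refine ⟨fun h => by simpa using h i, fun h j => ?_⟩
  rcases eq_or_ne j i with rfl | hj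
  · simpa using h
  · simp [hj]

section

variable {ι : Type*} [Fintype ι] [DecidableEq ι]

def levelSet (k : ι → ℕ) (l : ℕ) : Finset (ι → ℕ) := {a ∈ Iic k | ∑ i, a i = l}

@[simp]
theorem mem_levelSet {k a : ι → ℕ} {l : ℕ} : a ∈ levelSet k l ↔ a ≤ k ∧ ∑ i, a i = l := by
  simp [levelSet]

theorem levelSet_mono {k k' : ι → ℕ} (h : k ≤ k') (l : ℕ) : levelSet k l ⊆ levelSet k' l :=
  fun _ ha => mem_levelSet.2 ⟨(mem_levelSet.1 ha).1.trans h, (mem_levelSet.1 ha).2⟩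

theorem pi_single_mem_levelSet {k : ι → ℕ} {m : ι} {l : ℕ} (h : l ≤ k m) :
    Pi.single m l ∈ levelSet k l :=
  mem_levelSet.2 ⟨Pi.single_le_iff.2 h, Fintype.sum_pi_single' m l⟩

theorem levelSet_nonempty {a : ι → ℕ} {l : ℕ} (h : l ≤ ∑ i, a i) : (levelSet a l).Nonempty := by
  induction l with
  | zero => exact ⟨0, by simp⟩
  | succ l ih =>
    obtain ⟨b, hb⟩ := ih (by omega)
    obtain ⟨hba, hb⟩ := mem_levelSet.1 hb
    obtain ⟨m, hm⟩ : ∃ m, b m < a m := by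
      by_contra! hab
      have := sum_le_sum fun i (_ : i ∈ univ) => hab i
      omega
    refine ⟨b + Pi.single m 1, mem_levelSet.2 ⟨fun i => ?_, ?_⟩⟩
    · rcases eq_or_ne i m with rfl | hi
      · simpa using hm
      · simpa [hi] using hba i
    · simp [sum_add_distrib, hb]

theorem pi_single_add_pi_single_mem_levelSet_two {a : ι → ℕ} {i j : ι} (hij : i ≠ j)
    (hi : a i ≠ 0) (hj : a j ≠ 0) : Pi.single i 1 + Pi.single j 1 ∈ levelSet a 2 := by
  refine mem_levelSet.2 ⟨fun x => ?_, by simp [sum_add_distrib]⟩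
  simp only [Pi.add_apply, Pi.single_apply]
  grind

theorem exists_mem_levelSet_two_apply_ne_one {a : ι → ℕ} (h3 : 3 ≤ ∑ i, a i) (j : ι) :
    ∃ b ∈ levelSet a 2, b j ≠ 1 := by
  by_cases hj : 2 ≤ a j
  · exact ⟨Pi.single j 2, pi_single_mem_levelSet hj, by simp⟩
  -- the coordinates other than `j` carry mass at least `2`
  · set a' := a - Pi.single j (a j)
    have ha' : a' ≤ a := tsub_le_self
    have hsum : ∑ i, a' i = ∑ i, a i - a j := by
      simp only [a', Pi.sub_apply]
      rw [sum_tsub_distrib _ fun i _ => Pi.single_le_iff.2 le_rfl i,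
        Fintype.sum_pi_single']
    obtain ⟨b, hb⟩ := levelSet_nonempty (a := a') (l := 2) (by omega)
    refine ⟨b, levelSet_mono ha' 2 hb, fun hbj => ?_⟩
    have := (mem_levelSet.1 hb).1 j
    simp [a', hbj] at this

theorem one_lt_card_levelSet_two {a : ι → ℕ} (h3 : 3 ≤ ∑ i, a i) {i j : ι} (hij : i ≠ j)
    (hi : a i ≠ 0) (hj : a j ≠ 0) : 1 < #(levelSet a 2) := by
  obtain ⟨b, hb, hbj⟩ := exists_mem_levelSet_two_apply_ne_one h3 j
  refine one_lt_card.2 ⟨_, pi_single_add_pi_single_mem_levelSet_two hij hi hj, b, hb, ?_⟩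
  rintro rfl
  simp [hij] at hbj

theorem exists_eq_pi_single_or_one_lt_card_levelSet_two {a : ι → ℕ} (h3 : 3 ≤ ∑ i, a i) :
    (∃ m, a = Pi.single m (∑ i, a i)) ∨ 1 < #(levelSet a 2) := by
  by_cases h : ∃ i j, i ≠ j ∧ a i ≠ 0 ∧ a j ≠ 0
  · obtain ⟨i, j, hij, hi, hj⟩ := h
    exact Or.inr (one_lt_card_levelSet_two h3 hij hi hj)
  obtain ⟨m, -, hm⟩ := exists_ne_zero_of_sum_ne_zero (s := univ) (f := a) (by omega)
  have hsupp : ∀ i ≠ m, a i = 0 := fun i hi => by_contra fun hai => h ⟨i, m, hi, hai, hm⟩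
  refine Or.inl ⟨m, funext fun i => ?_⟩
  rw [Fintype.sum_eq_single m hsupp]
  rcases eq_or_ne i m with rfl | hi
  · simp
  · simp [hi, hsupp i hi]

theorem sum_card_levelSet_le_mul (k : ι → ℕ) (m n : ℕ) :
    ∑ a ∈ levelSet k (m + n), #(levelSet a n) ≤ #(levelSet k m) * #(levelSet k n) := by
  rw [← card_sigma, ← card_product]
  refine card_le_card_of_injOn (fun p => (p.1 - p.2, p.2)) ?_ ?_
  · rintro ⟨a, b⟩ hab
    simp only [coe_sigma, Set.mem_sigma_iff, mem_coe, mem_levelSet] at hab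
    obtain ⟨⟨hak, ha⟩, hba, hb⟩ := hab
    have hsum : ∑ i, (a - b) i = m := by
      rw [Pi.sub_def, sum_tsub_distrib _ fun i _ => hba i]
      omega
    simp only [coe_product, Set.mem_prod, mem_coe, mem_levelSet]
    exact ⟨⟨tsub_le_self.trans hak, hsum⟩, hba.trans hak, hb⟩
  · rintro ⟨a, b⟩ hab ⟨a', b'⟩ hab' h
    obtain ⟨h1, rfl⟩ := Prod.mk.inj h
    simp only [coe_sigma, Set.mem_sigma_iff, mem_coe, mem_levelSet] at hab hab'
    obtain rfl := (tsub_left_inj hab.2.1 hab'.2.1).1 h1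
    rfl

theorem card_filter_eq_pi_single_le (k : ι → ℕ) {K l : ℕ} (hl : l ≠ 0) (hlK : l ≤ K) :
    #{a ∈ levelSet k K | ∃ m, a = Pi.single m K} ≤ #(levelSet k l) := by
  calc #{a ∈ levelSet k K | ∃ m, a = Pi.single m K}
      ≤ #((univ.filter fun m => K ≤ k m).image (Pi.single · K)) := by
        refine card_le_card fun a ha => ?_
        obtain ⟨ha, m, rfl⟩ := mem_filter.1 ha
        exact mem_image_of_mem _ (by simpa using Pi.single_le_iff.1 (mem_levelSet.1 ha).1)
    _ ≤ #(univ.filter fun m => K ≤ k m) := card_image_le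
    _ ≤ #(levelSet k l) := by
        refine card_le_card_of_injOn (Pi.single · l) (fun m hm => ?_) fun m _ m' _ h => ?_
        · exact pi_single_mem_levelSet (hlK.trans (by simpa using hm))
        · by_contra hne
          exact hl (by simpa [hne] using congrFun h m)

theorem two_mul_card_levelSet_le (k : ι → ℕ) {K l : ℕ} (hK : 3 ≤ K) (hl : l ≠ 0) (hlK : l ≤ K) :
    2 * #(levelSet k K) ≤ #(levelSet k (K - 2)) * #(levelSet k 2) + #(levelSet k l) := by
  set P := {a ∈ levelSet k K | ∃ m, a = Pi.single m K}
  have hfiber : ∀ a ∈ levelSet k K, 2 ≤ #(levelSet a 2) + if a ∈ P then 1 else 0 := by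
    intro a ha
    obtain ⟨-, haK⟩ := mem_levelSet.1 ha
    rcases exists_eq_pi_single_or_one_lt_card_levelSet_two (a := a) (by omega) with hP | h
    · have hpos := (levelSet_nonempty (a := a) (l := 2) (by omega)).card_pos
      rw [if_pos (mem_filter.2 ⟨ha, haK ▸ hP⟩)]
      omega
    · omega
  calc 2 * #(levelSet k K) = ∑ a ∈ levelSet k K, 2 := by rw [sum_const, smul_eq_mul, mul_comm]
    _ ≤ ∑ a ∈ levelSet k K, (#(levelSet a 2) + if a ∈ P then 1 else 0) := sum_le_sum hfiber
    _ = ∑ a ∈ levelSet k (K - 2 + 2), #(levelSet a 2) + #P := by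
        rw [sum_add_distrib, sum_boole, Nat.cast_id, filter_mem_eq_inter,
          inter_eq_right.2 (filter_subset _ _), Nat.sub_add_cancel (by omega : 2 ≤ K)]
    _ ≤ _ := add_le_add (sum_card_levelSet_le_mul k _ _) (card_filter_eq_pi_single_le k hl hlK)

end

theorem stmt12_general (j : ℕ) (k : Fin j → ℕ)
    (Λ : ℕ → ℕ)
    (hΛ : ∀ l, Λ l = ((Finset.Iic k).filter
      (fun a : Fin j → ℕ => (∑ i, a i) = l)).card)
    (K : ℕ) (hK : 3 ≤ K) :
    ((Λ (K - 2) : ℤ)) * (Λ 2 : ℤ)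
      ≥ 2 * (Λ K : ℤ) - min ((Λ (K - 1) : ℤ)) ((Λ (K - 2) : ℤ)) := by
  have key (l : ℕ) (hl : l ≠ 0) (hlK : l ≤ K) : 2 * Λ K ≤ Λ (K - 2) * Λ 2 + Λ l := by
    simp only [hΛ]
    exact two_mul_card_levelSet_le k hK hl hlK
  have h₁ := key (K - 1) (by omega) (by omega)
  have h₂ := key (K - 2) (by omega) (by omega)
  rw [ge_iff_le, sub_le_iff_le_add, ← min_add_add_left, le_min_iff]
  exact ⟨by exact_mod_cast h₁, by exact_mod_cast h₂⟩

/-- Double-counting inequality for level-set cardinalities: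
`Λ_{j,k−2}·Λ_{j,2} ≥ 2·Λ_{j,k} − min(Λ_{j,k−1}, Λ_{j,k−2})` for `k ≥ 3`. -/
theorem stmt12 (j : ℕ) (k : Fin j → ℕ) (hmono : Monotone k)
    (Λ : ℕ → ℕ)
    (hΛ : ∀ l, Λ l = ((Finset.Iic k).filter
      (fun a : Fin j → ℕ => (∑ i, a i) = l)).card)
    (K : ℕ) (hK : 3 ≤ K) :
    ((Λ (K - 2) : ℤ)) * (Λ 2 : ℤ)
      ≥ 2 * (Λ K : ℤ) - min ((Λ (K - 1) : ℤ)) ((Λ (K - 2) : ℤ)) :=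
  stmt12_general j k Λ hΛ K hK
end

section
/- For integers j, k, l with 2 = l and 3 ≤ k ≤ j, one has the identity l·(C(j,k−1)·C(j,l) − C(j,k)·C(j,l−1)) = C(j,k)·C(j,l−1)·(k−l)(j+1)/(j−k+1), and consequently the inequality 2·(C(j,k−1)·C(j,2) − C(j,k)·C(j,1)) ≥ 2·C(j,k) − C(j,k−1). -/
/-! Everything follows from the ratio `C(j, k - 1) = C(j, k) · k / (j - k + 1)` and its analogue
for `l`: substituting both, each side becomes `C(j, k) C(j, l - 1) / (j - k + 1)` times a
polynomial in `j, k, l`. For the inequality, `2 C(j, k) - C(j, k - 1)` is rewritten the same way,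
and comparing numerators leaves `j (k - 2)(j + 1) ≥ 2 (j + 1) - 3k`, clear for `k ≥ 3`. -/

theorem Nat.cast_choose_mul_eq_cast_choose_pred_mul {R : Type*} [CommRing R] {n k : ℕ}
    (hk : 1 ≤ k) (hkn : k ≤ n + 1) :
    (n.choose k : R) * k = n.choose (k - 1) * (n - k + 1) := by
  obtain ⟨m, rfl⟩ : ∃ m, k = m + 1 := ⟨k - 1, by omega⟩
  have h := congrArg (Nat.cast : ℕ → R) (Nat.choose_succ_right_eq n m)
  push_cast [Nat.cast_sub (show m ≤ n by omega)] at h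
  push_cast [Nat.add_sub_cancel]
  linear_combination h

section Field

variable {K : Type*} [Field K] [CharZero K] {j k : ℕ}

theorem Nat.cast_sub_add_one_ne_zero (hkj : k ≤ j) : (j : K) - k + 1 ≠ 0 := by
  rw [sub_add_eq_add_sub, sub_ne_zero]
  exact_mod_cast (Nat.lt_succ_of_le hkj).ne'

theorem Nat.cast_choose_pred_eq (hk : 1 ≤ k) (hkj : k ≤ j) :
    (j.choose (k - 1) : K) = j.choose k * k / (j - k + 1) := by
  rw [eq_div_iff (Nat.cast_sub_add_one_ne_zero hkj),
    Nat.cast_choose_mul_eq_cast_choose_pred_mul hk (by omega)]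

theorem Nat.cast_choose_exchange {l : ℕ} (hk : 1 ≤ k) (hkj : k ≤ j) (hl : 1 ≤ l)
    (hlj : l ≤ j + 1) :
    (l : K) * (j.choose (k - 1) * j.choose l - j.choose k * j.choose (l - 1))
      = j.choose k * j.choose (l - 1) * ((k - l) * (j + 1)) / (j - k + 1) := by
  have hden : (j : K) - k + 1 ≠ 0 := Nat.cast_sub_add_one_ne_zero hkj
  have hl' := Nat.cast_choose_mul_eq_cast_choose_pred_mul (R := K) (n := j) hl hlj
  rw [eq_div_iff hden, Nat.cast_choose_pred_eq hk hkj]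
  field_simp
  linear_combination (j.choose k * k : K) * hl'

theorem Nat.two_mul_cast_choose_sub_cast_choose_pred (hk : 1 ≤ k) (hkj : k ≤ j) :
    2 * (j.choose k : K) - j.choose (k - 1)
      = j.choose k * (2 * (j - k + 1) - k) / (j - k + 1) := by
  have hden : (j : K) - k + 1 ≠ 0 := Nat.cast_sub_add_one_ne_zero hkj
  rw [Nat.cast_choose_pred_eq hk hkj]
  field_simp

end Field

/-- For `l = 2` and `3 ≤ k ≤ j`:
`l·(C(j,k−1)C(j,l) − C(j,k)C(j,l−1)) = C(j,k)C(j,l−1)·(k−l)(j+1)/(j−k+1)`,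
and consequently `2(C(j,k−1)C(j,2) − C(j,k)C(j,1)) ≥ 2C(j,k) − C(j,k−1)`. -/
theorem stmt13 (j k : ℕ) (hk : 3 ≤ k) (hkj : k ≤ j) :
    ((2 : ℚ) * ((Nat.choose j (k - 1) : ℚ) * (Nat.choose j 2 : ℚ)
        - (Nat.choose j k : ℚ) * (Nat.choose j 1 : ℚ))
      = (Nat.choose j k : ℚ) * (Nat.choose j 1 : ℚ)
          * (((k : ℚ) - 2) * ((j : ℚ) + 1)) / ((j : ℚ) - (k : ℚ) + 1))
    ∧ (2 : ℚ) * ((Nat.choose j (k - 1) : ℚ) * (Nat.choose j 2 : ℚ)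
        - (Nat.choose j k : ℚ) * (Nat.choose j 1 : ℚ))
      ≥ 2 * (Nat.choose j k : ℚ) - (Nat.choose j (k - 1) : ℚ) := by
  have hid := Nat.cast_choose_exchange (K := ℚ) (l := 2) (by omega) hkj (by norm_num) (by omega)
  push_cast at hid
  refine ⟨hid, ?_⟩
  rw [hid, Nat.two_mul_cast_choose_sub_cast_choose_pred (by omega) hkj, ge_iff_le, mul_assoc]
  have hk3 : (3 : ℚ) ≤ k := by exact_mod_cast hk
  have hnum : 2 * ((j : ℚ) - k + 1) - k ≤ j * ((k - 2) * (j + 1)) := by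
    nlinarith [mul_nonneg (sub_nonneg.2 hk3) (by positivity : (0 : ℚ) ≤ j * (j + 1)),
      sq_nonneg ((j : ℚ) - 1)]
  have hden : (0 : ℚ) ≤ j - k + 1 := by
    have : (k : ℚ) ≤ j := by exact_mod_cast hkj
    linarith
  rw [Nat.choose_one_right]
  gcongr
end

section
/- Define Γ̃_{𝐤,k}(p) by: Γ̃ = 0 if d = 0 or k = 0; Γ̃_{𝐤,1}(p) = d(1 − 1/p); and for k ≥ 2, Γ̃_{𝐤,k}(p) = max( max_{1≤j≤d} Γ̃_{𝐤_{(j)},k}(p) + 1/p, Γ̃_{𝐤,k−1}(max(2, p·𝒦_{𝐤,k−1}/𝒦_{𝐤,k})) ). Define γ_{𝐤,k}(p) by γ = 0 if d = 0 or k = 0, else γ_{𝐤,k}(p) = max(d/2, d − 𝒦_{𝐤,k}/p, max_{1≤j≤d} γ_{𝐤_{(j)},k}(p) + 1/p). Then for all d, k ≥ 0 and 2 ≤ p < ∞, Γ̃_{𝐤,k}(p) ≥ γ_{𝐤,k}(p). -/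
open Finset

/-- Homogeneous dimension `𝒦_{𝐤,k}` of the sublevel set
`{𝐚 ∈ ℕ^d : 𝐚 ≼ 𝐤, 1 ≤ |𝐚| ≤ k}`. -/
def Kdim (d : ℕ) (k : Fin d → ℕ) (K : ℕ) : ℕ :=
  ∑ a ∈ (Finset.Iic k).filter
      (fun a : Fin d → ℕ => 1 ≤ ∑ i, a i ∧ (∑ i, a i) ≤ K), ∑ i, a i

/-- The lower-bound exponent `γ_{𝐤,k}(p)` defined by the recursion
`γ = 0` for `d = 0` or `k = 0`, and otherwise
`γ_{𝐤,k}(p) = max(d/2, d − 𝒦_{𝐤,k}/p, max_j γ_{𝐤_{(j)},k}(p) + 1/p)`. -/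
noncomputable def gammaLB : (d : ℕ) → (Fin d → ℕ) → ℕ → ℝ → ℝ
  | 0, _, _, _ => 0
  | d + 1, k, K, p =>
    if K = 0 then 0 else
      max (max (((d : ℝ) + 1) / 2) (((d : ℝ) + 1) - (Kdim (d + 1) k K : ℝ) / p))
        (Finset.univ.sup' Finset.univ_nonempty
          (fun j : Fin (d + 1) => gammaLB d (k ∘ j.succAbove) K p + 1 / p))

/-- The exponent `Γ̃_{𝐤,k}(p)` from the decoupling proof:
`Γ̃ = 0` if `d = 0` or `k = 0`; `Γ̃_{𝐤,1}(p) = d(1 − 1/p)`; and for `k ≥ 2`,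
`Γ̃_{𝐤,k}(p) = max( max_j Γ̃_{𝐤_{(j)},k}(p) + 1/p,
Γ̃_{𝐤,k−1}(max(2, p·𝒦_{𝐤,k−1}/𝒦_{𝐤,k})) )`. -/
noncomputable def GammaT : (d : ℕ) → (Fin d → ℕ) → ℕ → ℝ → ℝ
  | 0, _, _, _ => 0
  | _ + 1, _, 0, _ => 0
  | d + 1, k, 1, p => ((d : ℝ) + 1) * (1 - 1 / p)
  | d + 1, k, m + 2, p =>
    max
      (Finset.univ.sup' Finset.univ_nonempty
        (fun j : Fin (d + 1) => GammaT d (k ∘ j.succAbove) (m + 2) p + 1 / p))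
      (GammaT (d + 1) k (m + 1)
        (max 2 (p * (Kdim (d + 1) k (m + 1) : ℝ) / (Kdim (d + 1) k (m + 2) : ℝ))))
  termination_by d _ K _ => (d, K)
  decreasing_by
    · exact Prod.Lex.left _ _ (by omega)
    · exact Prod.Lex.right _ (by omega)

/-! Induction on `d`, then on `k`. The terms `max_j γ_{𝐤_{(j)},k}(p) + 1/p` are controlled by the
induction on `d`. For `k = 1` the terms `d/2` and `d − 𝒦_{𝐤,1}/p` are at most `d(1 − 1/p)` because
`p ≥ 2` and `𝒦_{𝐤,1} ≥ d`. For `k ≥ 2` they are dominated by `γ_{𝐤,k−1}(p')` with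
`p' = max(2, p 𝒦_{𝐤,k−1}/𝒦_{𝐤,k})`, since `p' ≥ 2` and `𝒦_{𝐤,k−1}/p' ≤ 𝒦_{𝐤,k}/p`. -/

lemma le_Kdim {d : ℕ} {k : Fin d → ℕ} (hk : ∀ i, 0 < k i) {K : ℕ} (hK : K ≠ 0) :
    d ≤ Kdim d k K := by
  classical
  -- the unit vectors lie in the sublevel set, whose points all have weight at least 1
  set S := (Iic k).filter (fun a : Fin d → ℕ => 1 ≤ ∑ i, a i ∧ ∑ i, a i ≤ K)
  have hunit : Set.MapsTo (fun i : Fin d => (Pi.single i 1 : Fin d → ℕ)) ↑(univ : Finset (Fin d)) ↑S := by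
    intro i _
    simp only [S, coe_filter, Set.mem_ofPred_eq, mem_Iic, sum_pi_single', mem_univ, if_true]
    refine ⟨fun j => ?_, le_rfl, Nat.one_le_iff_ne_zero.mpr hK⟩
    rcases eq_or_ne j i with rfl | hji
    · simpa using Nat.one_le_iff_ne_zero.mpr (hk j).ne'
    · simp [Pi.single_eq_of_ne hji]
  have hinj : Set.InjOn (fun i : Fin d => (Pi.single i 1 : Fin d → ℕ)) ↑(univ : Finset (Fin d)) :=
    fun i _ j _ hij => by simpa [Pi.single_apply, eq_comm] using congrFun hij i
  calc d = #(univ : Finset (Fin d)) := by simp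
    _ ≤ #S := card_le_card_of_injOn _ hunit hinj
    _ = #S • 1 := by simp
    _ ≤ Kdim d k K := card_nsmul_le_sum S _ 1 fun a ha => (mem_filter.mp ha).2.1

lemma div_max_two_le (A : ℝ) {B p : ℝ} (hB : 0 < B) (hp : 0 < p) :
    A / max 2 (p * A / B) ≤ B / p := by
  rcases le_total (p * A / B) 2 with h | h
  · rw [max_eq_left h, div_le_div_iff₀ two_pos hp]
    nlinarith [(div_le_iff₀ hB).mp h]
  · rw [max_eq_right h]
    rcases eq_or_ne A 0 with rfl | hA
    · simp [div_nonneg hB.le hp.le]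
    · rw [div_div_eq_mul_div, mul_comm p A, mul_div_mul_left _ _ hA]

lemma GammaT_one (d : ℕ) (k : Fin d → ℕ) (p : ℝ) : GammaT d k 1 p = d * (1 - 1 / p) := by
  cases d with
  | zero => simp [GammaT]
  | succ d => rw [GammaT]; push_cast; ring

lemma gammaLB_succ {d : ℕ} (k : Fin (d + 1) → ℕ) (K : ℕ) (hK : K ≠ 0) (p : ℝ) :
    gammaLB (d + 1) k K p =
      max (max (((d : ℝ) + 1) / 2) (((d : ℝ) + 1) - (Kdim (d + 1) k K : ℝ) / p))
        (univ.sup' univ_nonempty fun j : Fin (d + 1) => gammaLB d (k ∘ j.succAbove) K p + 1 / p) := by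
  rw [gammaLB, if_neg hK]

lemma gammaLB_one_le {d : ℕ} {k : Fin (d + 1) → ℕ} (hk : ∀ i, 0 < k i) {p : ℝ} (hp : 2 ≤ p)
    (hsub : ∀ j : Fin (d + 1), gammaLB d (k ∘ j.succAbove) 1 p ≤ d * (1 - 1 / p)) :
    gammaLB (d + 1) k 1 p ≤ ((d : ℝ) + 1) * (1 - 1 / p) := by
  have hinv : 1 / p ≤ 1 / 2 := one_div_le_one_div_of_le two_pos hp
  have hKdim : ((d : ℝ) + 1) / p ≤ (Kdim (d + 1) k 1 : ℝ) / p := by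
    gcongr
    exact_mod_cast le_Kdim hk one_ne_zero
  have hd : (0 : ℝ) ≤ d := d.cast_nonneg
  rw [gammaLB_succ k 1 one_ne_zero]
  refine max_le (max_le ?_ ?_) (sup'_le _ _ fun j _ => ?_)
  · nlinarith
  · have : ((d : ℝ) + 1) * (1 - 1 / p) = (d + 1) - (d + 1) / p := by ring
    linarith
  · nlinarith [hsub j]

lemma gammaLB_le_GammaT_add_two {d m : ℕ} {k : Fin (d + 1) → ℕ} (hk : ∀ i, 0 < k i) {p : ℝ}
    (hp : 2 ≤ p)
    (hsub : ∀ j : Fin (d + 1),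
      gammaLB d (k ∘ j.succAbove) (m + 2) p ≤ GammaT d (k ∘ j.succAbove) (m + 2) p)
    (hprev : gammaLB (d + 1) k (m + 1) (max 2 (p * Kdim (d + 1) k (m + 1) / Kdim (d + 1) k (m + 2)))
      ≤ GammaT (d + 1) k (m + 1) (max 2 (p * Kdim (d + 1) k (m + 1) / Kdim (d + 1) k (m + 2)))) :
    gammaLB (d + 1) k (m + 2) p ≤ GammaT (d + 1) k (m + 2) p := by
  set p' := max 2 (p * (Kdim (d + 1) k (m + 1) : ℝ) / Kdim (d + 1) k (m + 2))
  have hB : (0 : ℝ) < Kdim (d + 1) k (m + 2) := by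
    exact_mod_cast (d.succ_pos).trans_le (le_Kdim hk (m + 1).succ_ne_zero)
  have hratio : Kdim (d + 1) k (m + 1) / p' ≤ Kdim (d + 1) k (m + 2) / p :=
    div_max_two_le _ hB (by linarith)
  rw [gammaLB_succ k (m + 1) m.succ_ne_zero] at hprev
  simp only [max_le_iff] at hprev
  obtain ⟨⟨hhalf, hmain⟩, -⟩ := hprev
  rw [gammaLB_succ k (m + 2) (m + 1).succ_ne_zero, GammaT]
  refine max_le (max_le ?_ ?_) ?_
  · exact le_max_of_le_right hhalf
  · exact le_max_of_le_right (by linarith)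
  · exact le_max_of_le_left (sup'_mono_fun fun j _ => add_le_add_left (hsub j) _)

/-- `Γ̃_{𝐤,k}(p) ≥ γ_{𝐤,k}(p)` for all `d, k ≥ 0` and `2 ≤ p < ∞`. -/
theorem stmt16 (d : ℕ) (k : Fin d → ℕ) (hk : ∀ i, 0 < k i)
    (K : ℕ) (p : ℝ) (hp : 2 ≤ p) :
    gammaLB d k K p ≤ GammaT d k K p := by
  induction d generalizing K p with
  | zero => simp [gammaLB, GammaT]
  | succ d ihd =>
    have hsub (j : Fin (d + 1)) := ihd (k ∘ j.succAbove) (fun i => hk _)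
    induction K generalizing p with
    | zero => simp [gammaLB, GammaT]
    | succ m ihm =>
      rcases m with _ | m
      · rw [GammaT_one]
        push_cast
        exact gammaLB_one_le hk hp fun j => (hsub j 1 p hp).trans_eq (GammaT_one _ _ _)
      · exact gammaLB_le_GammaT_add_two hk hp (fun j => hsub j _ p hp) (ihm _ (le_max_left _ _))
end
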